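/- arXiv:1708.04881 — 4 statements merged into one kernel-verified Lean document; each statement's English description precedes it below -/
import Mathlib

section
/- Let i ∈ N be a buyer and let ξ be a maximal element of the clinching polytope P^i_{w,d} (i.e., ξ ∈ P^i_{w,d} and no ξ' ∈ P^i_{w,d} satisfies ξ' ≥ ξ componentwise with ξ' ≠ ξ). Then ξ(E_i) = f_{w,d}(E) − f_{w,d}(E \ E_i). -/
open Finset

noncomputable section

namespace TwoSidedMarket

variable {B S : Type*} [Fintype B] [Fintype S] [DecidableEq B] [DecidableEq S]

/-- A function `f` on subsets of a ground set `G` is monotone submodular: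
`f ∅ = 0`, monotone on subsets of `G`, and submodular on subsets of `G`. -/
def IsMonoSubmodular {α : Type*} [DecidableEq α] (G : Finset α) (f : Finset α → ℝ) : Prop :=
  f ∅ = 0 ∧ (∀ A B : Finset α, A ⊆ B → B ⊆ G → f A ≤ f B) ∧
    ∀ A B : Finset α, A ⊆ G → B ⊆ G → f (A ∩ B) + f (A ∪ B) ≤ f A + f B

/-- Monotone submodular, without the requirement of vanishing at `∅`. -/
def IsMonoSubmodularWeak {α : Type*} [DecidableEq α] (G : Finset α) (f : Finset α → ℝ) : Prop :=
  (∀ A B : Finset α, A ⊆ B → B ⊆ G → f A ≤ f B) ∧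
    ∀ A B : Finset α, A ⊆ G → B ⊆ G → f (A ∩ B) + f (A ∪ B) ≤ f A + f B

/-- `E_i`: the edges of `E` incident to buyer `i`. -/
def Ei (E : Finset (B × S)) (i : B) : Finset (B × S) := E.filter fun e => e.1 = i

/-- `E_j`: the edges of `E` incident to seller `j`. -/
def Ej (E : Finset (B × S)) (j : S) : Finset (B × S) := E.filter fun e => e.2 = j

/-- `E_X`: the edges of `E` incident to some buyer in `X`. -/
def EX (E : Finset (B × S)) (X : Finset B) : Finset (B × S) := E.filter fun e => e.1 ∈ X

/-- `N_F`: the buyers incident to some edge of `F`. -/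
def NF (F : Finset (B × S)) : Finset B := F.image Prod.fst

/-- `x(F) = Σ_{e ∈ F} x e`. -/
def vsum (x : B × S → ℝ) (F : Finset (B × S)) : ℝ := ∑ e ∈ F, x e

/-- Membership `w ∈ P = ⊕_j P_j`: `w` is nonnegative, supported on `E`, and
`w|_{E_j} ∈ P_j` for every seller `j`. -/
def memP (E : Finset (B × S)) (fj : S → Finset (B × S) → ℝ) (w : B × S → ℝ) : Prop :=
  (∀ e, 0 ≤ w e) ∧ (∀ e ∉ E, w e = 0) ∧ ∀ j : S, ∀ F ⊆ Ej E j, vsum w F ≤ fj j F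

/-- `f(F) := Σ_{j ∈ M} f_j (E_j ∩ F)`. -/
def fTot (E : Finset (B × S)) (fj : S → Finset (B × S) → ℝ) (F : Finset (B × S)) : ℝ :=
  ∑ j : S, fj j (Ej E j ∩ F)

/-- `f_w(F) := min_{F ⊆ F' ⊆ E} (f(F') - w(F'))`. -/
def fw (E : Finset (B × S)) (fj : S → Finset (B × S) → ℝ)
    (w : B × S → ℝ) (F : Finset (B × S)) : ℝ :=
  sInf {r : ℝ | ∃ F' : Finset (B × S), F ⊆ F' ∧ F' ⊆ E ∧ r = fTot E fj F' - vsum w F'}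

/-- Membership in the remnant supply polytope `P_{w,d}`. -/
def memPwd (E : Finset (B × S)) (fj : S → Finset (B × S) → ℝ)
    (w : B × S → ℝ) (d : B → ℝ) (x : B × S → ℝ) : Prop :=
  (∀ e, 0 ≤ x e) ∧ (∀ e ∉ E, x e = 0) ∧ memP E fj (w + x) ∧
    ∀ i : B, vsum x (Ei E i) ≤ d i

/-- `f_{w,d}(F) := max_{x ∈ P_{w,d}} x(F)`. -/
def fwd (E : Finset (B × S)) (fj : S → Finset (B × S) → ℝ)
    (w : B × S → ℝ) (d : B → ℝ) (F : Finset (B × S)) : ℝ :=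
  sSup {r : ℝ | ∃ x : B × S → ℝ, memPwd E fj w d x ∧ r = vsum x F}

/-- `P^i_{w,d}(ξ)`: the remnant supply polytope of the buyers other than `i`,
given that buyer `i` receives `ξ`.  (Vectors indexed by `N - i` are encoded as
functions on all of `B` vanishing at `i`.) -/
def PiWd (E : Finset (B × S)) (fj : S → Finset (B × S) → ℝ)
    (w : B × S → ℝ) (d : B → ℝ) (i : B) (ξ : B × S → ℝ) : Set (B → ℝ) :=
  {u | u i = 0 ∧ (∀ k, 0 ≤ u k) ∧
    ∃ x : B × S → ℝ, memPwd E fj w d x ∧ (∀ e ∈ Ei E i, x e = ξ e) ∧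
      ∀ k : B, k ≠ i → vsum x (Ei E k) = u k}

/-- The clinching polytope `P^i_{w,d}` of buyer `i`:
all `ξ ∈ ℝ_{≥0}^{E_i}` with `P^i_{w,d}(ξ) = P^i_{w,d}(0)`. -/
def ClinchP (E : Finset (B × S)) (fj : S → Finset (B × S) → ℝ)
    (w : B × S → ℝ) (d : B → ℝ) (i : B) : Set (B × S → ℝ) :=
  {ξ | (∀ e, 0 ≤ ξ e) ∧ (∀ e ∉ Ei E i, ξ e = 0) ∧
    PiWd E fj w d i ξ = PiWd E fj w d i 0}


/-!
The clinching polytope of buyer `i` is the polymatroid of the set function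
`g(F) = f_{w,d}(F ∪ (E \ E_i)) - f_{w,d}(E \ E_i)` on `E_i`, and a maximal vector `ξ` of the
polymatroid of a submodular `g` with `g ∅ = 0` satisfies `ξ(E_i) = g(E_i)`: the sets on which
`ξ` is tight are closed under union, and an edge lying in none of them could be raised.

Submodularity of `g` comes from max-flow/min-cut duality, `f_{w,d}(G) = min_A cutCost G A`:
optimal cuts for `F` and `F'` combine into cuts for `F ∪ F'` and `F ∩ F'`. The duality, and the
fact that buyer `i` can be given any vector of the polymatroid without changing the other buyers'
totals, are both proved by augmenting paths. Take an optimal allocation that falls short; every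
edge reachable from the deficient one by augmenting steps lies in a tight set (else pushing flow
along the path would improve it), the union of their minimal tight sets is a tight cut, and
counting the flow across this cut gives the bound that the shortfall violates.
-/

set_option linter.unusedSectionVars false

open Filter Topology

section SetFunction

variable {α : Type*}

lemma sum_add_smul (x ν : α → ℝ) (δ : ℝ) (F : Finset α) :
    ∑ e ∈ F, (x + δ • ν) e = ∑ e ∈ F, x e + δ * ∑ e ∈ F, ν e := by
  simp [Finset.sum_add_distrib, Finset.mul_sum]

lemma eventually_add_mul_le {a b c : ℝ} (h : a < c ∨ a ≤ c ∧ b ≤ 0) :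
    ∀ᶠ δ in 𝓝[>] 0, a + δ * b ≤ c := by
  rcases h with hac | ⟨hac, hb⟩
  · have hlim : Tendsto (fun δ : ℝ => a + δ * b) (𝓝 0) (𝓝 (a + 0 * b)) :=
      (tendsto_id.mul_const b).const_add a
    rw [zero_mul, add_zero] at hlim
    exact nhdsWithin_le_nhds ((hlim.eventually (gt_mem_nhds hac)).mono fun _ => le_of_lt)
  · exact eventually_nhdsWithin_of_forall fun δ (hδ : 0 < δ) => by nlinarith

variable [DecidableEq α]

def SubmodularOn (G : Finset α) (g : Finset α → ℝ) : Prop :=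
  ∀ A ⊆ G, ∀ C ⊆ G, g (A ∩ C) + g (A ∪ C) ≤ g A + g C

def IsTight (g : Finset α → ℝ) (x : α → ℝ) (A : Finset α) : Prop :=
  ∑ e ∈ A, x e = g A

/-- `P(g)`, with the vectors of `ℝ_{≥0}^G` encoded as functions on `α` vanishing off `G`. -/
def polymatroid (G : Finset α) (g : Finset α → ℝ) : Set (α → ℝ) :=
  {ξ | (∀ e, 0 ≤ ξ e) ∧ (∀ e ∉ G, ξ e = 0) ∧ ∀ F ⊆ G, ∑ e ∈ F, ξ e ≤ g F}

namespace SubmodularOn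

variable {G : Finset α} {g : Finset α → ℝ} {x : α → ℝ} {A C : Finset α}

lemma isTight_inter_union (hg : SubmodularOn G g) (hx : ∀ F ⊆ G, ∑ e ∈ F, x e ≤ g F)
    (hA : A ⊆ G) (hC : C ⊆ G) (htA : IsTight g x A) (htC : IsTight g x C) :
    IsTight g x (A ∩ C) ∧ IsTight g x (A ∪ C) := by
  have := hx _ (Finset.union_subset hA hC)
  have := hx (A ∩ C) (Finset.inter_subset_left.trans hA)
  have := hg A hA C hC
  have := Finset.sum_union_inter (s₁ := A) (s₂ := C) (f := x)
  unfold IsTight at *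
  constructor <;> linarith

lemma isTight_biUnion {ι : Type*} [DecidableEq ι] (hg : SubmodularOn G g) (hg0 : g ∅ = 0)
    (hx : ∀ F ⊆ G, ∑ e ∈ F, x e ≤ g F) {s : Finset ι} {t : ι → Finset α}
    (hts : ∀ i ∈ s, t i ⊆ G) (ht : ∀ i ∈ s, IsTight g x (t i)) :
    IsTight g x (s.biUnion t) := by
  induction s using Finset.induction with
  | empty => simp [IsTight, hg0]
  | insert a s _ ih =>
    rw [Finset.biUnion_insert]
    refine (hg.isTight_inter_union hx (hts a (Finset.mem_insert_self a s))
      (Finset.biUnion_subset.2 fun i hi => hts i (Finset.mem_insert_of_mem hi))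
      (ht a (Finset.mem_insert_self a s)) (ih (fun i hi => hts i (Finset.mem_insert_of_mem hi))
        fun i hi => ht i (Finset.mem_insert_of_mem hi))).2

lemma isTight_inf' {ι : Type*} (hg : SubmodularOn G g)
    (hx : ∀ F ⊆ G, ∑ e ∈ F, x e ≤ g F) {s : Finset ι} (hs : s.Nonempty) {t : ι → Finset α}
    (hts : ∀ i ∈ s, t i ⊆ G) (ht : ∀ i ∈ s, IsTight g x (t i)) :
    IsTight g x (s.inf' hs t) :=
  (Finset.inf'_induction hs t (p := fun A => A ⊆ G ∧ IsTight g x A)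
    (fun _ h₁ _ h₂ => ⟨Finset.inter_subset_left.trans h₁.1,
      (hg.isTight_inter_union hx h₁.1 h₂.1 h₁.2 h₂.2).1⟩)
    fun i hi => ⟨hts i hi, ht i hi⟩).2

end SubmodularOn

lemma eventually_add_smul_single_mem_polymatroid {G : Finset α} {g : Finset α → ℝ}
    {ξ : α → ℝ} (hξ : ξ ∈ polymatroid G g) {e : α} (he : e ∈ G)
    (hfree : ∀ F ⊆ G, e ∈ F → ¬ IsTight g ξ F) :
    ∀ᶠ ε in 𝓝[>] (0 : ℝ), ξ + ε • Pi.single e 1 ∈ polymatroid G g := by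
  obtain ⟨hξ0, hξG, hξg⟩ := hξ
  have hle : ∀ F ∈ G.powerset, ∀ᶠ ε in 𝓝[>] 0,
      ∑ e' ∈ F, ξ e' + ε * ∑ e' ∈ F, (Pi.single e 1 : α → ℝ) e' ≤ g F := by
    intro F hF
    rw [Finset.mem_powerset] at hF
    refine eventually_add_mul_le ?_
    by_cases heF : e ∈ F
    · exact Or.inl (lt_of_le_of_ne (hξg F hF) (hfree F hF heF))
    · exact Or.inr ⟨hξg F hF, by simp [Finset.sum_pi_single', heF]⟩
  filter_upwards [self_mem_nhdsWithin, (Filter.eventually_all_finset G.powerset).2 hle]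
    with ε (hε : 0 < ε) hall
  refine ⟨fun e' => ?_, fun e' he' => ?_, fun F hF => ?_⟩
  · simpa using add_nonneg (hξ0 e') (mul_nonneg hε.le
      ((Pi.single_nonneg.2 zero_le_one : (0 : α → ℝ) ≤ Pi.single e 1) e'))
  · have : e' ≠ e := fun h => he' (h ▸ he)
    simp [hξG e' he', this]
  · rw [sum_add_smul]
    exact hall F (Finset.mem_powerset.2 hF)

theorem sum_eq_of_maximal_mem_polymatroid {G : Finset α} {g : Finset α → ℝ} (hg : SubmodularOn G g)
    (hg0 : g ∅ = 0) {ξ : α → ℝ} (hξ : Maximal (· ∈ polymatroid G g) ξ) :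
    ∑ e ∈ G, ξ e = g G := by
  have htight : ∀ e ∈ G, ∃ F ⊆ G, e ∈ F ∧ IsTight g ξ F := by
    intro e he
    by_contra! hfree
    obtain ⟨ε, hmem, hε : 0 < ε⟩ :=
      ((eventually_add_smul_single_mem_polymatroid hξ.1 he hfree).and self_mem_nhdsWithin).exists
    have := hξ.2 hmem (le_add_of_nonneg_right (smul_nonneg hε.le
      (Pi.single_nonneg.2 zero_le_one))) e
    simp at this
    linarith
  choose! T hTG heT hT using htight
  have hU : G.biUnion T = G :=
    subset_antisymm (Finset.biUnion_subset.2 hTG)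
      fun e he => Finset.mem_biUnion.2 ⟨e, he, heT e he⟩
  have := hg.isTight_biUnion hg0 hξ.1.2.2 hTG hT
  rwa [hU] at this

end SetFunction

section Polytope

variable {E : Finset (B × S)} {fj : S → Finset (B × S) → ℝ} {w : B × S → ℝ} {d : B → ℝ}
  {x y : B × S → ℝ}

lemma mem_Ei {e : B × S} {k : B} : e ∈ Ei E k ↔ e ∈ E ∧ e.1 = k := Finset.mem_filter

lemma Ei_subset (k : B) : Ei E k ⊆ E := Finset.filter_subset _ _

lemma Ei_subset_sdiff_Ei {i k : B} (hk : k ≠ i) : Ei E k ⊆ E \ Ei E i := fun _ he =>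
  Finset.mem_sdiff.2 ⟨Ei_subset k he, fun he' => hk ((mem_Ei.1 he).2.symm.trans (mem_Ei.1 he').2)⟩

lemma vsum_eq_sum_inter_Ei (x : B × S → ℝ) {A : Finset (B × S)} (hA : A ⊆ E) :
    vsum x A = ∑ k, vsum x (A ∩ Ei E k) := by
  have hfib : ∀ k, A ∩ Ei E k = A.filter (·.1 = k) := fun k => by
    ext e; simp only [Finset.mem_inter, Finset.mem_filter, mem_Ei]; grind
  simp only [hfib, vsum, Finset.sum_fiberwise]

lemma vsum_EX (x : B × S → ℝ) (K : Finset B) :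
    vsum x (EX E K) = ∑ k ∈ K, vsum x (Ei E k) := by
  refine (Finset.sum_fiberwise_of_maps_to (g := Prod.fst) (fun e he => (Finset.mem_filter.1 he).2)
    x).symm.trans (Finset.sum_congr rfl fun k hk => ?_)
  congr 1; ext e; simp only [Ei, Finset.mem_filter]; grind

lemma Ei_inter_EX (k : B) (K : Finset B) :
    Ei E k ∩ EX E K = if k ∈ K then Ei E k else ∅ := by
  ext e
  simp only [Ei, EX, Finset.mem_inter, Finset.mem_filter]
  split_ifs <;> simp <;> grind

lemma sdiff_Ei_eq_EX (i : B) : E \ Ei E i = EX E (Finset.univ.erase i) := by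
  ext e; simp only [EX, Ei, Finset.mem_sdiff, Finset.mem_filter, Finset.mem_erase]; grind

lemma vsum_sdiff_Ei (x : B × S → ℝ) (i : B) :
    vsum x (E \ Ei E i) = ∑ k ∈ Finset.univ.erase i, vsum x (Ei E k) := by
  rw [sdiff_Ei_eq_EX, vsum_EX]

lemma vsum_indicator (G A : Finset (B × S)) (x : B × S → ℝ) :
    vsum ((G : Set (B × S)).indicator x) A = vsum x (A ∩ G) := by
  simp [vsum, Set.indicator_apply, Finset.sum_ite_mem]

lemma vsum_add (x y : B × S → ℝ) (F : Finset (B × S)) : vsum (x + y) F = vsum x F + vsum y F :=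
  Finset.sum_add_distrib

lemma vsum_add_smul (x ν : B × S → ℝ) (δ : ℝ) (F : Finset (B × S)) :
    vsum (x + δ • ν) F = vsum x F + δ * vsum ν F :=
  sum_add_smul x ν δ F

lemma vsum_le_vsum_of_subset (hx : ∀ e, 0 ≤ x e) {F G : Finset (B × S)} (h : F ⊆ G) :
    vsum x F ≤ vsum x G :=
  Finset.sum_le_sum_of_subset_of_nonneg h fun e _ _ => hx e

variable (E fj w) in
def rk (A : Finset (B × S)) : ℝ := fTot E fj A - vsum w A

lemma rk_empty (hfj : ∀ j, IsMonoSubmodular (Ej E j) (fj j)) : rk E fj w ∅ = 0 := by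
  simp [rk, fTot, vsum, (hfj _).1]

lemma submodularOn_rk (hfj : ∀ j, IsMonoSubmodular (Ej E j) (fj j)) :
    SubmodularOn E (rk E fj w) := by
  intro A _ C _
  have hf : fTot E fj (A ∩ C) + fTot E fj (A ∪ C) ≤ fTot E fj A + fTot E fj C := by
    simp only [fTot, ← Finset.sum_add_distrib]
    refine Finset.sum_le_sum fun j _ => ?_
    rw [Finset.inter_inter_distrib_left, Finset.inter_union_distrib_left]
    exact (hfj j).2.2 _ _ Finset.inter_subset_left Finset.inter_subset_left
  have hw : vsum w (A ∪ C) + vsum w (A ∩ C) = vsum w A + vsum w C := Finset.sum_union_inter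
  simp only [rk]
  linarith

lemma vsum_eq_sum_Ej_inter (x : B × S → ℝ) {A : Finset (B × S)} (hA : A ⊆ E) :
    vsum x A = ∑ j, vsum x (Ej E j ∩ A) := by
  have hfib : ∀ j, Ej E j ∩ A = A.filter (·.2 = j) := fun j => by
    ext e; simp only [Finset.mem_inter, Finset.mem_filter, Ej]; grind
  simp only [hfib, vsum, Finset.sum_fiberwise]

lemma vsum_le_rk (hx : memPwd E fj w d x) {A : Finset (B × S)} (hA : A ⊆ E) :
    vsum x A ≤ rk E fj w A := by
  have hj : ∀ j, vsum (w + x) (Ej E j ∩ A) ≤ fj j (Ej E j ∩ A) :=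
    fun j => hx.2.2.1.2.2 j _ Finset.inter_subset_left
  have hsum : vsum (w + x) A ≤ fTot E fj A := by
    rw [vsum_eq_sum_Ej_inter _ hA]; exact Finset.sum_le_sum fun j _ => hj j
  rw [vsum_add] at hsum
  rw [rk]
  linarith

lemma memPwd_of_vsum_le_rk (hfj : ∀ j, IsMonoSubmodular (Ej E j) (fj j)) (hw : memP E fj w)
    (hx0 : ∀ e, 0 ≤ x e) (hxE : ∀ e ∉ E, x e = 0) (hrk : ∀ A ⊆ E, vsum x A ≤ rk E fj w A)
    (hcap : ∀ k, vsum x (Ei E k) ≤ d k) : memPwd E fj w d x := by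
  refine ⟨hx0, hxE, ⟨fun e => add_nonneg (hw.1 e) (hx0 e), fun e he => by
    simp [hw.2.1 e he, hxE e he], fun j F hF => ?_⟩, hcap⟩
  have hfF : fTot E fj F = fj j F := by
    rw [fTot, Finset.sum_eq_single j]
    · rw [Finset.inter_eq_right.2 hF]
    · intro j' _ hj'
      rw [Finset.disjoint_iff_inter_eq_empty.1, (hfj j').1]
      exact Finset.disjoint_of_subset_right hF
        (Finset.disjoint_filter.2 fun e _ h h' => hj' (h.symm.trans h'))
    · simp
  have := hrk F (hF.trans (Finset.filter_subset _ _))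
  rw [rk, hfF] at this
  rw [vsum_add]
  linarith

lemma memPwd_zero (hw : memP E fj w) (hd : ∀ k, 0 ≤ d k) : memPwd E fj w d 0 :=
  ⟨fun _ => le_rfl, fun _ _ => rfl, by simpa using hw, fun k => by simpa [vsum] using hd k⟩

lemma memPwd_of_le (hw : memP E fj w) (hx : memPwd E fj w d x) (hy0 : ∀ e, 0 ≤ y e)
    (hyx : ∀ e, y e ≤ x e) : memPwd E fj w d y := by
  have hsum : ∀ F, vsum y F ≤ vsum x F := fun F => Finset.sum_le_sum fun e _ => hyx e
  refine ⟨hy0, fun e he => le_antisymm (hx.2.1 e he ▸ hyx e) (hy0 e),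
    ⟨fun e => add_nonneg (hw.1 e) (hy0 e), fun e he => ?_, fun j F hF => ?_⟩,
    fun k => (hsum _).trans (hx.2.2.2 k)⟩
  · simp [hw.2.1 e he, le_antisymm (hx.2.1 e he ▸ hyx e) (hy0 e)]
  · have := hx.2.2.1.2.2 j F hF
    rw [vsum_add] at this ⊢
    linarith [hsum F]

lemma memPwd_indicator (hw : memP E fj w) (hx : memPwd E fj w d x) (G : Finset (B × S)) :
    memPwd E fj w d ((G : Set (B × S)).indicator x) :=
  memPwd_of_le hw hx (Set.indicator_nonneg fun e _ => hx.1 e)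
    (Set.indicator_le_self' fun e _ => hx.1 e)

lemma vsum_le_rk_E (hx : memPwd E fj w d x) (F : Finset (B × S)) :
    vsum x F ≤ rk E fj w E :=
  calc vsum x F ≤ vsum x Finset.univ := vsum_le_vsum_of_subset hx.1 (Finset.subset_univ F)
    _ = vsum x E := (Finset.sum_subset (Finset.subset_univ E) fun e _ he => hx.2.1 e he).symm
    _ ≤ rk E fj w E := vsum_le_rk hx subset_rfl

lemma isClosed_setOf_memPwd : IsClosed {x | memPwd E fj w d x} := by
  simp only [memPwd, memP, vsum, Set.ofPred_and, Set.ofPred_forall]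
  repeat' first
    | apply IsClosed.inter
    | (apply isClosed_iInter; intro)
    | apply isClosed_le
    | apply isClosed_eq
    | fun_prop

lemma exists_isMaxOn_vsum {C : Set (B × S → ℝ)} (hC : ∀ x ∈ C, memPwd E fj w d x)
    (hCc : IsClosed C) (hne : C.Nonempty) (F : Finset (B × S)) :
    ∃ x ∈ C, ∀ y ∈ C, vsum y F ≤ vsum x F := by
  have hbox : C ⊆ Set.univ.pi fun _ => Set.Icc 0 (rk E fj w E) := fun x hx e _ =>
    ⟨(hC x hx).1 e, by simpa [vsum] using vsum_le_rk_E (hC x hx) {e}⟩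
  obtain ⟨x, hx, hmax⟩ := ((isCompact_univ_pi fun _ => isCompact_Icc).of_isClosed_subset hCc
    hbox).exists_isMaxOn hne (continuous_finsetSum F fun e _ => continuous_apply e).continuousOn
  exact ⟨x, hx, fun y hy => hmax hy⟩

lemma vsum_le_fwd (hx : memPwd E fj w d x) (F : Finset (B × S)) :
    vsum x F ≤ fwd E fj w d F :=
  le_csSup ⟨rk E fj w E, by rintro _ ⟨y, hy, rfl⟩; exact vsum_le_rk_E hy F⟩ ⟨x, hx, rfl⟩

lemma fwd_le (hw : memP E fj w) (hd : ∀ k, 0 ≤ d k) {F : Finset (B × S)} {c : ℝ}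
    (h : ∀ x, memPwd E fj w d x → vsum x F ≤ c) : fwd E fj w d F ≤ c :=
  csSup_le ⟨_, 0, memPwd_zero hw hd, rfl⟩ (by rintro _ ⟨x, hx, rfl⟩; exact h x hx)

lemma exists_memPwd_vsum_eq_fwd (hw : memP E fj w) (hd : ∀ k, 0 ≤ d k) (G : Finset (B × S)) :
    ∃ x, memPwd E fj w d x ∧ (∀ e ∉ G, x e = 0) ∧ vsum x G = fwd E fj w d G := by
  obtain ⟨x, hx, hmax⟩ := exists_isMaxOn_vsum (fun x hx => hx) isClosed_setOf_memPwd
    ⟨0, memPwd_zero hw hd⟩ G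
  refine ⟨_, memPwd_indicator hw hx G, fun e he => Set.indicator_of_notMem he x, ?_⟩
  rw [vsum_indicator, Finset.inter_self]
  exact le_antisymm (vsum_le_fwd hx G) (fwd_le hw hd hmax)

lemma eventually_memPwd_add_smul (hfj : ∀ j, IsMonoSubmodular (Ej E j) (fj j))
    (hw : memP E fj w) (hx : memPwd E fj w d x) {ν : B × S → ℝ} (hνE : ∀ e ∉ E, ν e = 0)
    (hνneg : ∀ e, ν e < 0 → 0 < x e)
    (htight : ∀ A ⊆ E, IsTight (rk E fj w) x A → vsum ν A ≤ 0)
    (hcap : ∀ k, vsum x (Ei E k) = d k → vsum ν (Ei E k) ≤ 0) :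
    ∀ᶠ δ in 𝓝[>] (0 : ℝ), memPwd E fj w d (x + δ • ν) := by
  have hnonneg : ∀ e, ∀ᶠ δ in 𝓝[>] (0 : ℝ), -x e + δ * -ν e ≤ 0 := fun e =>
    eventually_add_mul_le <| (lt_or_ge (ν e) 0).imp (fun h => by linarith [hνneg e h])
      fun h => ⟨by linarith [hx.1 e], by linarith⟩
  have hrk : ∀ A ∈ E.powerset, ∀ᶠ δ in 𝓝[>] (0 : ℝ), vsum x A + δ * vsum ν A ≤ rk E fj w A :=
    fun A hA => eventually_add_mul_le <|
      (vsum_le_rk hx (Finset.mem_powerset.1 hA)).lt_or_eq.imp_right fun h =>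
        ⟨h.le, htight A (Finset.mem_powerset.1 hA) h⟩
  have hcap' : ∀ k, ∀ᶠ δ in 𝓝[>] (0 : ℝ), vsum x (Ei E k) + δ * vsum ν (Ei E k) ≤ d k :=
    fun k => eventually_add_mul_le <| (hx.2.2.2 k).lt_or_eq.imp_right fun h => ⟨h.le, hcap k h⟩
  filter_upwards [Filter.eventually_all.2 hnonneg, (Filter.eventually_all_finset _).2 hrk,
    Filter.eventually_all.2 hcap'] with δ h0 hrkδ hcapδ
  refine memPwd_of_vsum_le_rk hfj hw (fun e => by simp; linarith [h0 e])
    (fun e he => by simp [hx.2.1 e he, hνE e he]) (fun A hA => ?_) fun k => ?_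
  · simpa only [vsum_add_smul] using hrkδ A (Finset.mem_powerset.2 hA)
  · simpa only [vsum_add_smul] using hcapδ k

end Polytope

section Cuts

variable {E : Finset (B × S)} {fj : S → Finset (B × S) → ℝ} {w : B × S → ℝ} {d : B → ℝ}
  {x : B × S → ℝ} {G A : Finset (B × S)}

variable (E d) in
def uncoveredDemand (G A : Finset (B × S)) (k : B) : ℝ := if Ei E k ∩ G ⊆ A then 0 else d k

variable (E fj w d) in
def cutCost (G A : Finset (B × S)) : ℝ := rk E fj w A + ∑ k, uncoveredDemand E d G A k

lemma uncoveredDemand_inter_add_union_le (hd : ∀ k, 0 ≤ d k) (G A C : Finset (B × S)) (k : B) :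
    uncoveredDemand E d G (A ∩ C) k + uncoveredDemand E d G (A ∪ C) k ≤
      uncoveredDemand E d G A k + uncoveredDemand E d G C k := by
  simp only [uncoveredDemand]
  by_cases hkA : Ei E k ∩ G ⊆ A <;> by_cases hkC : Ei E k ∩ G ⊆ C
  · simp [hkA, hkC, Finset.subset_inter hkA hkC, hkA.trans Finset.subset_union_left]
  · have : ¬ Ei E k ∩ G ⊆ A ∩ C := fun h => hkC (h.trans Finset.inter_subset_right)
    simp [hkA, hkC, hkA.trans Finset.subset_union_left, this]
  · have : ¬ Ei E k ∩ G ⊆ A ∩ C := fun h => hkA (h.trans Finset.inter_subset_left)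
    simp [hkA, hkC, hkC.trans Finset.subset_union_right, this]
  · have : ¬ Ei E k ∩ G ⊆ A ∩ C := fun h => hkA (h.trans Finset.inter_subset_left)
    simp only [hkA, hkC, this, if_false]
    split_ifs <;> linarith [hd k]

lemma submodularOn_cutCost (hfj : ∀ j, IsMonoSubmodular (Ej E j) (fj j)) (hd : ∀ k, 0 ≤ d k)
    (G : Finset (B × S)) : SubmodularOn E (cutCost E fj w d G) := by
  intro A hA C hC
  have hrk := submodularOn_rk (w := w) hfj A hA C hC
  have := Finset.sum_le_sum fun k (_ : k ∈ Finset.univ) =>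
    uncoveredDemand_inter_add_union_le (E := E) hd G A C k
  simp only [Finset.sum_add_distrib] at this
  simp only [cutCost]
  linarith

lemma vsum_le_cutCost (hx : memPwd E fj w d x) (hG : G ⊆ E) (hA : A ⊆ E) :
    vsum x G ≤ cutCost E fj w d G A := by
  have hsplit : vsum x (G ∩ A) + vsum x (G \ A) = vsum x G :=
    Finset.sum_inter_add_sum_sdiff G A x
  have hin : vsum x (G ∩ A) ≤ rk E fj w A :=
    (vsum_le_vsum_of_subset hx.1 Finset.inter_subset_right).trans (vsum_le_rk hx hA)
  have hout : vsum x (G \ A) ≤ ∑ k, uncoveredDemand E d G A k := by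
    rw [vsum_eq_sum_inter_Ei x (Finset.sdiff_subset.trans hG)]
    refine Finset.sum_le_sum fun k _ => ?_
    rw [uncoveredDemand]
    split_ifs with hk
    · refine (Finset.sum_eq_zero fun e he => ?_).le
      simp only [Finset.mem_inter, Finset.mem_sdiff] at he
      exact absurd (hk (Finset.mem_inter.2 ⟨he.2, he.1.1⟩)) he.1.2
    · exact (vsum_le_vsum_of_subset hx.1 Finset.inter_subset_right).trans (hx.2.2.2 k)
  rw [cutCost]
  linarith

lemma fwd_le_cutCost (hw : memP E fj w) (hd : ∀ k, 0 ≤ d k) (hG : G ⊆ E) (hA : A ⊆ E) :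
    fwd E fj w d G ≤ cutCost E fj w d G A :=
  fwd_le hw hd fun _ hx => vsum_le_cutCost hx hG hA

lemma vsum_eq_cutCost (hA : A ⊆ E) (htA : IsTight (rk E fj w) x A)
    (hbuyer : ∀ k, if Ei E k ∩ G ⊆ A then ∀ e ∈ Ei E k \ A, x e = 0
      else vsum x (Ei E k) = d k ∧ ∀ e ∈ Ei E k ∩ A, x e = 0) :
    vsum x E = cutCost E fj w d G A := by
  have hterm : ∀ k, vsum x ((E \ A) ∩ Ei E k) = uncoveredDemand E d G A k := by
    intro k
    have hEk : (E \ A) ∩ Ei E k = Ei E k \ A := by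
      ext e; simp only [Finset.mem_inter, Finset.mem_sdiff, mem_Ei]; tauto
    have hk := hbuyer k
    rw [hEk, uncoveredDemand]
    split_ifs at hk ⊢
    · exact Finset.sum_eq_zero hk
    · have hsplit : vsum x (Ei E k ∩ A) + vsum x (Ei E k \ A) = vsum x (Ei E k) :=
        Finset.sum_inter_add_sum_sdiff _ _ _
      have hzero : vsum x (Ei E k ∩ A) = 0 := Finset.sum_eq_zero hk.2
      linarith [hk.1]
  have hsplit : vsum x (E ∩ A) + vsum x (E \ A) = vsum x E := Finset.sum_inter_add_sum_sdiff _ _ _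
  rw [Finset.inter_eq_right.2 hA, vsum_eq_sum_inter_Ei x Finset.sdiff_subset] at hsplit
  simp only [hterm] at hsplit
  rw [cutCost, ← hsplit, ← htA]
  rfl

end Cuts

section AugmentingPaths

open Classical

variable {E : Finset (B × S)} {fj : S → Finset (B × S) → ℝ} {w : B × S → ℝ} {d : B → ℝ}
  {x : B × S → ℝ} {A T seeds : Finset (B × S)} {s e : B × S}

variable (E fj w) in
/-- The least tight set containing `e`; it is `univ` when no tight set contains `e`. -/
def tightClosure (x : B × S → ℝ) (e : B × S) : Finset (B × S) :=
  (E.powerset.filter fun A => IsTight (rk E fj w) x A ∧ e ∈ A).inf id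

lemma mem_tightClosure_self : e ∈ tightClosure E fj w x e :=
  Finset.mem_inf.2 fun _ hA => (Finset.mem_filter.1 hA).2.2

lemma tightClosure_subset (hA : A ⊆ E) (htA : IsTight (rk E fj w) x A) (he : e ∈ A) :
    tightClosure E fj w x e ⊆ A :=
  Finset.inf_le (f := id) (Finset.mem_filter.2 ⟨Finset.mem_powerset.2 hA, htA, he⟩)

lemma isTight_tightClosure (hfj : ∀ j, IsMonoSubmodular (Ej E j) (fj j))
    (hx : memPwd E fj w d x) (hA : A ⊆ E) (htA : IsTight (rk E fj w) x A) (he : e ∈ A) :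
    tightClosure E fj w x e ⊆ E ∧ IsTight (rk E fj w) x (tightClosure E fj w x e) := by
  refine ⟨(tightClosure_subset hA htA he).trans hA, ?_⟩
  rw [tightClosure, ← Finset.inf'_eq_inf
    ⟨A, Finset.mem_filter.2 ⟨Finset.mem_powerset.2 hA, htA, he⟩⟩]
  exact (submodularOn_rk hfj).isTight_inf' (fun F hF => vsum_le_rk hx hF) _
    (fun F hF => Finset.mem_powerset.1 (Finset.mem_filter.1 hF).1)
    fun F hF => (Finset.mem_filter.1 hF).2.1

variable (E fj w) in
/-- Raising `e` breaks every tight set containing `e`, hence `f`; moving flow from `f` to `e'`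
(same buyer) repairs them, at the cost of raising `e'`. -/
def AugStep (x : B × S → ℝ) (T : Finset (B × S)) (e e' : B × S) : Prop :=
  ∃ f ∈ tightClosure E fj w x e, 0 < x f ∧ f ∈ T ∧ e' ∈ T ∧ e'.1 = f.1

variable (E fj w) in
/-- `Pi.single s 1 + μ` is the direction pushing a unit into `s` along an augmenting path
ending at `e`. -/
def IsAugmentingDirection (x : B × S → ℝ) (T : Finset (B × S)) (s e : B × S)
    (μ : B × S → ℝ) : Prop :=
  (∀ h ∉ T, μ h = 0) ∧ (∀ k, vsum μ (Ei E k) = 0) ∧ (∀ h, μ h < 0 → 0 < x h) ∧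
    ∀ A ⊆ E, IsTight (rk E fj w) x A → vsum (Pi.single s 1 + μ) A ≤ if e ∈ A then 1 else 0

lemma isAugmentingDirection_zero : IsAugmentingDirection E fj w x T s s 0 :=
  ⟨fun _ _ => rfl, fun _ => Finset.sum_const_zero, fun _ hh => absurd hh (lt_irrefl 0),
    fun A _ _ => by simp [vsum, Finset.sum_pi_single']⟩

lemma IsAugmentingDirection.tail {e e' : B × S} {μ : B × S → ℝ} (hT : T ⊆ E)
    (hμ : IsAugmentingDirection E fj w x T s e μ) (hstep : AugStep E fj w x T e e') :
    ∃ μ', IsAugmentingDirection E fj w x T s e' μ' := by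
  obtain ⟨hμT, hμk, hμneg, hμA⟩ := hμ
  obtain ⟨f, hf, hxf, hfT, he'T, hbuy⟩ := hstep
  have hsum : ∀ F, vsum (μ + Pi.single e' 1 - Pi.single f 1) F =
      vsum μ F + ((if e' ∈ F then 1 else 0) - if f ∈ F then 1 else 0) := fun F => by
    simp only [vsum, Pi.add_apply, Pi.sub_apply, Finset.sum_add_distrib, Finset.sum_sub_distrib,
      Finset.sum_pi_single']
    ring
  refine ⟨μ + Pi.single e' 1 - Pi.single f 1, fun h hh => ?_, fun k => ?_, fun h hh => ?_,
    fun A hA htA => ?_⟩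
  · have h1 : h ≠ e' := fun h' => hh (h' ▸ he'T)
    have h2 : h ≠ f := fun h' => hh (h' ▸ hfT)
    simp [hμT h hh, h1, h2]
  · have hiff : e' ∈ Ei E k ↔ f ∈ Ei E k := by
      rw [mem_Ei, mem_Ei, hbuy]
      exact and_congr_left fun _ => iff_of_true (hT he'T) (hT hfT)
    simp only [hsum, hμk k, hiff, sub_self, add_zero]
  · by_cases hhf : h = f
    · exact hhf ▸ hxf
    · refine hμneg h ?_
      have : 0 ≤ (Pi.single e' 1 : B × S → ℝ) h :=
        (Pi.single_nonneg.2 zero_le_one : (0 : B × S → ℝ) ≤ Pi.single e' 1) h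
      simp only [Pi.add_apply, Pi.sub_apply, Pi.single_eq_of_ne hhf] at hh
      linarith
  · have hprev := hμA A hA htA
    have hadd : vsum (Pi.single s 1 + (μ + Pi.single e' 1 - Pi.single f 1)) A =
        vsum (Pi.single s 1 + μ) A + ((if e' ∈ A then 1 else 0) - if f ∈ A then 1 else 0) := by
      rw [vsum_add, hsum, vsum_add]
      ring
    rw [hadd]
    by_cases heA : e ∈ A
    · have hfA : f ∈ A := tightClosure_subset hA htA heA hf
      simp only [heA, hfA, if_true] at hprev ⊢
      split_ifs <;> linarith
    · simp only [heA, if_false] at hprev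
      split_ifs <;> linarith

lemma exists_isAugmentingDirection (hT : T ⊆ E)
    (h : Relation.ReflTransGen (AugStep E fj w x T) s e) :
    ∃ μ, IsAugmentingDirection E fj w x T s e μ := by
  induction h with
  | refl => exact ⟨0, isAugmentingDirection_zero⟩
  | tail _ hstep ih => exact ih.elim fun μ hμ => hμ.tail hT hstep

lemma exists_feasible_augmentation (hfj : ∀ j, IsMonoSubmodular (Ej E j) (fj j))
    (hw : memP E fj w) (hx : memPwd E fj w d x) (hT : T ⊆ E) (hsE : s ∈ E)
    (hslack : vsum x (Ei E s.1) < d s.1) (h : Relation.ReflTransGen (AugStep E fj w x T) s e)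
    (hfree : ∀ A ⊆ E, IsTight (rk E fj w) x A → e ∉ A) :
    ∃ μ : B × S → ℝ, (∀ h ∉ T, μ h = 0) ∧ (∀ k, vsum μ (Ei E k) = 0) ∧
      ∀ᶠ δ in 𝓝[>] (0 : ℝ), memPwd E fj w d (x + δ • (Pi.single s 1 + μ)) := by
  obtain ⟨μ, hμT, hμk, hμneg, hμA⟩ := exists_isAugmentingDirection hT h
  refine ⟨μ, hμT, hμk, eventually_memPwd_add_smul hfj hw hx (fun h hh => ?_) (fun h hh => ?_)
    (fun A hA htA => ?_) fun k hk => ?_⟩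
  · have : h ≠ s := fun h' => hh (h' ▸ hsE)
    simp [hμT h fun h' => hh (hT h'), this]
  · refine hμneg h ?_
    have : (0 : ℝ) ≤ (Pi.single s 1 : B × S → ℝ) h :=
      (Pi.single_nonneg.2 zero_le_one : (0 : B × S → ℝ) ≤ Pi.single s 1) h
    simp only [Pi.add_apply] at hh
    linarith
  · simpa [hfree A hA htA] using hμA A hA htA
  · have hs : s ∉ Ei E k := fun hs => by
      rw [(mem_Ei.1 hs).2] at hslack
      exact hslack.ne hk
    simpa [vsum, Finset.sum_add_distrib, Finset.sum_pi_single', hs] using (hμk k).le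

variable (E fj w) in
def augCut (x : B × S → ℝ) (T seeds : Finset (B × S)) : Finset (B × S) :=
  (E.filter fun e => ∃ s ∈ seeds, Relation.ReflTransGen (AugStep E fj w x T) s e).biUnion
    (tightClosure E fj w x)

lemma mem_augCut_of_reach (hT : T ⊆ E) (hseeds : seeds ⊆ E) (hs : s ∈ seeds)
    (h : Relation.ReflTransGen (AugStep E fj w x T) s e) : e ∈ augCut E fj w x T seeds := by
  have heE : e ∈ E := by
    rcases h.cases_tail with rfl | ⟨_, _, _, _, _, _, he, _⟩
    exacts [hseeds hs, hT he]
  exact Finset.mem_biUnion.2 ⟨e, Finset.mem_filter.2 ⟨heE, s, hs, h⟩, mem_tightClosure_self⟩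

lemma mem_augCut_of_pos (hT : T ⊆ E) (hseeds : seeds ⊆ E) {f e' : B × S}
    (hf : f ∈ augCut E fj w x T seeds) (hxf : 0 < x f) (hfT : f ∈ T) (he'T : e' ∈ T)
    (hbuy : e'.1 = f.1) : e' ∈ augCut E fj w x T seeds := by
  obtain ⟨e, he, hfe⟩ := Finset.mem_biUnion.1 hf
  obtain ⟨-, s, hs, hse⟩ := Finset.mem_filter.1 he
  exact mem_augCut_of_reach hT hseeds hs (hse.tail ⟨f, hfe, hxf, hfT, he'T, hbuy⟩)

lemma isTight_augCut (hfj : ∀ j, IsMonoSubmodular (Ej E j) (fj j)) (hx : memPwd E fj w d x)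
    (hblocked : ∀ s ∈ seeds, ∀ e, Relation.ReflTransGen (AugStep E fj w x T) s e →
      ∃ A ⊆ E, IsTight (rk E fj w) x A ∧ e ∈ A) :
    augCut E fj w x T seeds ⊆ E ∧ IsTight (rk E fj w) x (augCut E fj w x T seeds) := by
  have hcl : ∀ e ∈ E.filter fun e => ∃ s ∈ seeds, Relation.ReflTransGen (AugStep E fj w x T) s e,
      tightClosure E fj w x e ⊆ E ∧ IsTight (rk E fj w) x (tightClosure E fj w x e) := by
    intro e he
    obtain ⟨-, s, hs, hse⟩ := Finset.mem_filter.1 he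
    obtain ⟨A, hA, htA, heA⟩ := hblocked s hs e hse
    exact isTight_tightClosure hfj hx hA htA heA
  exact ⟨Finset.biUnion_subset.2 fun e he => (hcl e he).1,
    (submodularOn_rk hfj).isTight_biUnion (rk_empty hfj) (fun F hF => vsum_le_rk hx hF)
      (fun e he => (hcl e he).1) fun e he => (hcl e he).2⟩

end AugmentingPaths

section StrongDuality

variable {E : Finset (B × S)} {fj : S → Finset (B × S) → ℝ} {w : B × S → ℝ} {d : B → ℝ}
  {x : B × S → ℝ} {G : Finset (B × S)} {s e : B × S}

lemma exists_tight_of_reach_of_isMaxOn (hfj : ∀ j, IsMonoSubmodular (Ej E j) (fj j))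
    (hw : memP E fj w) (hx : memPwd E fj w d x) (hG : G ⊆ E)
    (hopt : ∀ y, memPwd E fj w d y → vsum y G ≤ vsum x G) (hsG : s ∈ G)
    (hslack : vsum x (Ei E s.1) < d s.1) (h : Relation.ReflTransGen (AugStep E fj w x G) s e) :
    ∃ A ⊆ E, IsTight (rk E fj w) x A ∧ e ∈ A := by
  by_contra! hfree
  obtain ⟨μ, hμG, hμk, hfeas⟩ :=
    exists_feasible_augmentation hfj hw hx hG (hG hsG) hslack h hfree
  obtain ⟨δ, hδ, hδpos : 0 < δ⟩ := (hfeas.and self_mem_nhdsWithin).exists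
  have hμ : vsum μ G = 0 := by
    rw [vsum, Finset.sum_subset hG fun h _ hh => hμG h hh, ← vsum,
      vsum_eq_sum_inter_Ei μ subset_rfl]
    simp [Finset.inter_eq_right.2 (Ei_subset _), hμk]
  have hν : vsum (Pi.single s 1 + μ) G = 1 := by
    rw [vsum_add, hμ]
    simp [vsum, Finset.sum_pi_single', hsG]
  have := hopt _ hδ
  rw [vsum_add_smul, hν] at this
  linarith

theorem exists_cutCost_eq_fwd (hfj : ∀ j, IsMonoSubmodular (Ej E j) (fj j))
    (hw : memP E fj w) (hd : ∀ k, 0 ≤ d k) (hG : G ⊆ E) :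
    ∃ A ⊆ E, cutCost E fj w d G A = fwd E fj w d G := by
  classical
  obtain ⟨x, hx, hxG, hxval⟩ := exists_memPwd_vsum_eq_fwd hw hd G
  set seeds := G.filter fun s => vsum x (Ei E s.1) < d s.1
  have hseeds : seeds ⊆ E := (Finset.filter_subset _ _).trans hG
  obtain ⟨hAE, htA⟩ := isTight_augCut hfj hx (T := G) fun s hs e h =>
    exists_tight_of_reach_of_isMaxOn hfj hw hx hG (fun y hy => hxval ▸ vsum_le_fwd hy G)
      (Finset.mem_filter.1 hs).1 (Finset.mem_filter.1 hs).2 h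
  have hsupp : ∀ e, x e ≠ 0 → e ∈ G := fun e he => by_contra fun h => he (hxG e h)
  refine ⟨_, hAE, ?_⟩
  rw [← hxval, vsum, Finset.sum_subset hG fun e _ he => hxG e he]
  refine (vsum_eq_cutCost hAE htA fun k => ?_).symm
  split_ifs with hk
  · intro e he
    by_contra hxe
    obtain ⟨hek, heA⟩ := Finset.mem_sdiff.1 he
    exact heA (hk (Finset.mem_inter.2 ⟨hek, hsupp e hxe⟩))
  · obtain ⟨e, he, heA⟩ := Finset.not_subset.1 hk
    obtain ⟨hek, heG⟩ := Finset.mem_inter.1 he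
    refine ⟨(hx.2.2.2 k).eq_of_not_lt fun hlt => heA (mem_augCut_of_reach hG hseeds
      (Finset.mem_filter.2 ⟨heG, (mem_Ei.1 hek).2 ▸ hlt⟩) .refl), fun f hf => ?_⟩
    by_contra hxf
    obtain ⟨hfk, hfA⟩ := Finset.mem_inter.1 hf
    exact heA (mem_augCut_of_pos hG hseeds hfA ((hx.1 f).lt_of_ne' hxf) (hsupp f hxf) heG
      ((mem_Ei.1 hek).2.trans (mem_Ei.1 hfk).2.symm))

end StrongDuality

section ClinchRank

variable {E : Finset (B × S)} {fj : S → Finset (B × S) → ℝ} {w : B × S → ℝ} {d : B → ℝ}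
  {i : B} {F A : Finset (B × S)}

lemma cutCost_union_sdiff_Ei (hF : F ⊆ Ei E i) (A : Finset (B × S)) :
    cutCost E fj w d (F ∪ (E \ Ei E i)) A =
      cutCost E fj w d (E \ Ei E i) A + if F ⊆ A then 0 else d i := by
  have hi : Ei E i ∩ (F ∪ (E \ Ei E i)) = F := by
    rw [Finset.inter_union_distrib_left, Finset.inter_sdiff_self, Finset.union_empty,
      Finset.inter_eq_right.2 hF]
  have hEk : ∀ k ∈ Finset.univ.erase i, Ei E k ∩ (F ∪ (E \ Ei E i)) = Ei E k ∩ (E \ Ei E i) :=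
    fun k hk => by
      have := Ei_subset_sdiff_Ei (E := E) (Finset.ne_of_mem_erase hk)
      rw [Finset.inter_eq_left.2 this,
        Finset.inter_eq_left.2 (this.trans Finset.subset_union_right)]
  have hk' : ∀ k ∈ Finset.univ.erase i, uncoveredDemand E d (F ∪ (E \ Ei E i)) A k =
      uncoveredDemand E d (E \ Ei E i) A k := fun k hk => by rw [uncoveredDemand, hEk k hk]; rfl
  have hi' : uncoveredDemand E d (F ∪ (E \ Ei E i)) A i = if F ⊆ A then 0 else d i := by
    rw [uncoveredDemand, hi]
  have hi'' : uncoveredDemand E d (E \ Ei E i) A i = 0 := by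
    simp [uncoveredDemand, Finset.inter_sdiff_self]
  rw [cutCost, cutCost, ← Finset.add_sum_erase _ _ (Finset.mem_univ i),
    ← Finset.add_sum_erase _ _ (Finset.mem_univ i), Finset.sum_congr rfl hk', hi', hi'']
  ring

variable (E fj w d) in
def clinchRank (i : B) (F : Finset (B × S)) : ℝ :=
  fwd E fj w d (F ∪ (E \ Ei E i)) - fwd E fj w d (E \ Ei E i)

lemma fwd_union_sdiff_Ei_le (hw : memP E fj w) (hd : ∀ k, 0 ≤ d k) (hF : F ⊆ Ei E i)
    (hA : A ⊆ E) :
    fwd E fj w d (F ∪ (E \ Ei E i)) ≤ cutCost E fj w d (E \ Ei E i) A + if F ⊆ A then 0 else d i :=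
  cutCost_union_sdiff_Ei hF A ▸ fwd_le_cutCost hw hd
    (Finset.union_subset (hF.trans (Ei_subset i)) Finset.sdiff_subset) hA

lemma clinchRank_le (hfj : ∀ j, IsMonoSubmodular (Ej E j) (fj j)) (hw : memP E fj w)
    (hd : ∀ k, 0 ≤ d k) (hF : F ⊆ Ei E i) : clinchRank E fj w d i F ≤ d i := by
  obtain ⟨A, hA, hAv⟩ :=
    exists_cutCost_eq_fwd hfj hw hd (Finset.sdiff_subset (s := E) (t := Ei E i))
  have := fwd_union_sdiff_Ei_le hw hd hF hA
  rw [clinchRank, ← hAv]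
  split_ifs at this <;> linarith [hd i]

lemma submodularOn_clinchRank (hfj : ∀ j, IsMonoSubmodular (Ej E j) (fj j))
    (hw : memP E fj w) (hd : ∀ k, 0 ≤ d k) : SubmodularOn (Ei E i) (clinchRank E fj w d i) := by
  intro F hF F' hF'
  have hU : ∀ {F₀}, F₀ ⊆ Ei E i → F₀ ∪ (E \ Ei E i) ⊆ E := fun h =>
    Finset.union_subset (h.trans (Ei_subset i)) Finset.sdiff_subset
  obtain ⟨A, hA, hAv⟩ := exists_cutCost_eq_fwd hfj hw hd (hU hF)
  obtain ⟨A', hA', hA'v⟩ := exists_cutCost_eq_fwd hfj hw hd (hU hF')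
  rw [cutCost_union_sdiff_Ei hF] at hAv
  rw [cutCost_union_sdiff_Ei hF'] at hA'v
  have hsub := submodularOn_cutCost (w := w) hfj hd (E \ Ei E i) A hA A' hA'
  have hle : ∀ {F₀ A₀}, F₀ ⊆ Ei E i → A₀ ⊆ E →
      fwd E fj w d (F₀ ∪ (E \ Ei E i)) ≤ cutCost E fj w d (E \ Ei E i) A₀ + d i :=
    fun hF₀ hA₀ => (fwd_union_sdiff_Ei_le hw hd hF₀ hA₀).trans (by split_ifs <;> linarith [hd i])
  have hcov : ∀ {F₀ A₀}, F₀ ⊆ Ei E i → A₀ ⊆ E → F₀ ⊆ A₀ →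
      fwd E fj w d (F₀ ∪ (E \ Ei E i)) ≤ cutCost E fj w d (E \ Ei E i) A₀ :=
    fun hF₀ hA₀ h => by simpa [h] using fwd_union_sdiff_Ei_le (d := d) hw hd hF₀ hA₀
  have hFi : F ∩ F' ⊆ Ei E i := Finset.inter_subset_left.trans hF
  have hFu : F ∪ F' ⊆ Ei E i := Finset.union_subset hF hF'
  simp only [clinchRank]
  -- If `A` and `A'` cover `F` and `F'`, then `A ∩ A'` and `A ∪ A'` cover `F ∩ F'` and `F ∪ F'`;
  -- a cut that does not cover its set already pays `d i`, which pays for reusing it.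
  by_cases hFA : F ⊆ A <;> by_cases hFA' : F' ⊆ A' <;>
    simp only [hFA, hFA', if_true, if_false, add_zero] at hAv hA'v
  · linarith [hcov hFi (Finset.inter_subset_left.trans hA) (Finset.inter_subset_inter hFA hFA'),
      hcov hFu (Finset.union_subset hA hA') (Finset.union_subset_union hFA hFA')]
  · linarith [hcov hFi hA (Finset.inter_subset_left.trans hFA), hle hFu hA']
  · linarith [hcov hFi hA' (Finset.inter_subset_right.trans hFA'), hle hFu hA]
  · linarith [hle hFi hA, hle hFu hA']

lemma uncoveredDemand_add_uncoveredDemand_EX_le (hd : ∀ k, 0 ≤ d k) {K : Finset B}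
    (hiK : i ∉ K) (hKA : ∀ k ∈ K, Ei E k ⊆ A) (A₀ : Finset (B × S)) (k : B) :
    uncoveredDemand E d (Ei E i ∩ A ∪ (E \ Ei E i)) (A ∪ A₀) k +
      uncoveredDemand E d (EX E K) (A ∩ A₀) k ≤ uncoveredDemand E d (E \ Ei E i) A₀ k := by
  simp only [uncoveredDemand, Ei_inter_EX]
  by_cases hki : k = i
  · subst hki
    have hcov : Ei E k ∩ (Ei E k ∩ A ∪ (E \ Ei E k)) ⊆ A ∪ A₀ := by
      rw [Finset.inter_union_distrib_left, Finset.inter_sdiff_self, Finset.union_empty]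
      exact Finset.inter_subset_right.trans
        (Finset.inter_subset_right.trans Finset.subset_union_left)
    simp only [hcov, hiK, if_true, if_false, Finset.empty_subset, add_zero]
    split_ifs <;> linarith [hd k]
  have hR := Ei_subset_sdiff_Ei (E := E) hki
  rw [Finset.inter_eq_left.2 hR, Finset.inter_eq_left.2 (hR.trans Finset.subset_union_right)]
  by_cases hkK : k ∈ K
  · simp [hkK, (hKA k hkK).trans Finset.subset_union_left, Finset.subset_inter_iff, hKA k hkK]
  · simp only [hkK, if_false, Finset.empty_subset, if_true, add_zero]
    by_cases hk₀ : Ei E k ⊆ A₀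
    · simp [hk₀, hk₀.trans Finset.subset_union_right]
    · simp only [hk₀, if_false]
      split_ifs <;> linarith [hd k]

lemma clinchRank_inter_add_fwd_EX_le (hfj : ∀ j, IsMonoSubmodular (Ej E j) (fj j))
    (hw : memP E fj w) (hd : ∀ k, 0 ≤ d k) (hA : A ⊆ E) {K : Finset B} (hiK : i ∉ K)
    (hKA : ∀ k ∈ K, Ei E k ⊆ A) :
    clinchRank E fj w d i (Ei E i ∩ A) + fwd E fj w d (EX E K) ≤ rk E fj w A := by
  obtain ⟨A₀, hA₀, hA₀v⟩ :=
    exists_cutCost_eq_fwd hfj hw hd (Finset.sdiff_subset (s := E) (t := Ei E i))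
  have h1 := fwd_le_cutCost hw hd (G := Ei E i ∩ A ∪ (E \ Ei E i))
    (Finset.union_subset (Finset.inter_subset_left.trans (Ei_subset i)) Finset.sdiff_subset)
    (Finset.union_subset hA hA₀)
  have h2 := fwd_le_cutCost hw hd (G := EX E K) (Finset.filter_subset _ _)
    (Finset.inter_subset_left.trans hA : A ∩ A₀ ⊆ E)
  have h3 := submodularOn_rk (w := w) hfj A hA A₀ hA₀
  have h4 := Finset.sum_le_sum fun k (_ : k ∈ Finset.univ) =>
    uncoveredDemand_add_uncoveredDemand_EX_le hd hiK hKA A₀ k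
  simp only [Finset.sum_add_distrib] at h4
  simp only [cutCost, clinchRank] at h1 h2 hA₀v ⊢
  linarith

end ClinchRank

section Exchange

variable {E : Finset (B × S)} {fj : S → Finset (B × S) → ℝ} {w : B × S → ℝ} {d : B → ℝ}
  {i : B} {ζ x : B × S → ℝ} {A : Finset (B × S)}

lemma clinchRank_inter_le_vsum (hfj : ∀ j, IsMonoSubmodular (Ej E j) (fj j)) (hw : memP E fj w)
    (hd : ∀ k, 0 ≤ d k) (hx : memPwd E fj w d x) (hA : A ⊆ E) (htA : IsTight (rk E fj w) x A)
    (hclosed : ∀ f ∈ A, 0 < x f → f.1 ≠ i → Ei E f.1 ⊆ A) :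
    clinchRank E fj w d i (Ei E i ∩ A) ≤ vsum x (Ei E i ∩ A) := by
  set K := Finset.univ.filter fun k => k ≠ i ∧ Ei E k ⊆ A
  have hiK : i ∉ K := by simp [K]
  have hrank :=
    clinchRank_inter_add_fwd_EX_le hfj hw hd hA hiK fun k hk => (Finset.mem_filter.1 hk).2.2
  have hzero : ∀ f ∈ A \ Ei E i, f ∉ (A \ Ei E i) ∩ EX E K → x f = 0 := by
    intro f hf hfK
    by_contra hxf
    obtain ⟨hfA, hfi⟩ := Finset.mem_sdiff.1 hf
    have hfi : f.1 ≠ i := fun h => hfi (mem_Ei.2 ⟨hA hfA, h⟩)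
    exact hfK (Finset.mem_inter.2 ⟨hf, Finset.mem_filter.2 ⟨hA hfA, Finset.mem_filter.2
      ⟨Finset.mem_univ _, hfi, hclosed f hfA ((hx.1 f).lt_of_ne' hxf) hfi⟩⟩⟩)
  have hout : vsum x (A \ Ei E i) ≤ fwd E fj w d (EX E K) :=
    calc vsum x (A \ Ei E i) = vsum x ((A \ Ei E i) ∩ EX E K) :=
          (Finset.sum_subset Finset.inter_subset_left hzero).symm
      _ ≤ vsum x (EX E K) := vsum_le_vsum_of_subset hx.1 Finset.inter_subset_right
      _ ≤ fwd E fj w d (EX E K) := vsum_le_fwd hx _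
  have hsplit : vsum x (Ei E i ∩ A) + vsum x (A \ Ei E i) = vsum x A := by
    rw [Finset.inter_comm]; exact Finset.sum_inter_add_sum_sdiff _ _ _
  have htA' : vsum x A = rk E fj w A := htA
  linarith

lemma exists_tight_of_reach_of_isMaxOn_Ei (hfj : ∀ j, IsMonoSubmodular (Ej E j) (fj j))
    (hw : memP E fj w) (hx : memPwd E fj w d x) (hxζ : ∀ e ∈ Ei E i, x e ≤ ζ e)
    (hmax : ∀ y, memPwd E fj w d y → (∀ e ∈ Ei E i, y e ≤ ζ e) →
      (∀ k ≠ i, vsum y (Ei E k) = vsum x (Ei E k)) → vsum y (Ei E i) ≤ vsum x (Ei E i))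
    (hcap : vsum x (Ei E i) < d i) {e₀ e : B × S} (he₀ : e₀ ∈ Ei E i) (hlt : x e₀ < ζ e₀)
    (h : Relation.ReflTransGen (AugStep E fj w x (E \ Ei E i)) e₀ e) :
    ∃ A ⊆ E, IsTight (rk E fj w) x A ∧ e ∈ A := by
  by_contra! hfree
  obtain ⟨μ, hμR, hμk, hfeas⟩ := exists_feasible_augmentation hfj hw hx Finset.sdiff_subset
    (Ei_subset i he₀) ((mem_Ei.1 he₀).2 ▸ hcap) h hfree
  have hμi : ∀ h ∈ Ei E i, μ h = 0 := fun h hh => hμR h fun h' => (Finset.mem_sdiff.1 h').2 hh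
  have hνk : ∀ k ≠ i, vsum (Pi.single e₀ 1 + μ) (Ei E k) = 0 := fun k hk => by
    have : e₀ ∉ Ei E k := fun h => hk ((mem_Ei.1 h).2.symm.trans (mem_Ei.1 he₀).2)
    simpa [vsum, Finset.sum_add_distrib, Finset.sum_pi_single', this] using hμk k
  have hνi : vsum (Pi.single e₀ 1 + μ) (Ei E i) = 1 := by
    simp [vsum, Finset.sum_add_distrib, Finset.sum_pi_single', he₀, Finset.sum_eq_zero hμi]
  have hroom : ∀ᶠ δ in 𝓝[>] (0 : ℝ), x e₀ + δ * 1 ≤ ζ e₀ :=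
    eventually_add_mul_le (Or.inl (by simpa using hlt))
  obtain ⟨δ, ⟨hδ, hδζ⟩, hδpos : 0 < δ⟩ := ((hfeas.and hroom).and self_mem_nhdsWithin).exists
  have := hmax _ hδ (fun e he => ?_) fun k hk => ?_
  · rw [vsum_add_smul, hνi] at this
    linarith
  · rcases eq_or_ne e e₀ with rfl | hee₀
    · simpa [hμi e he] using hδζ
    · simpa [hμi e he, hee₀] using hxζ e he
  · rw [vsum_add_smul, hνk k hk, mul_zero, add_zero]

lemma eqOn_Ei_of_isMaxOn (hfj : ∀ j, IsMonoSubmodular (Ej E j) (fj j)) (hw : memP E fj w)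
    (hd : ∀ k, 0 ≤ d k) (hζ : ζ ∈ polymatroid (Ei E i) (clinchRank E fj w d i))
    (hx : memPwd E fj w d x) (hxζ : ∀ e ∈ Ei E i, x e ≤ ζ e)
    (hmax : ∀ y, memPwd E fj w d y → (∀ e ∈ Ei E i, y e ≤ ζ e) →
      (∀ k ≠ i, vsum y (Ei E k) = vsum x (Ei E k)) → vsum y (Ei E i) ≤ vsum x (Ei E i)) :
    ∀ e ∈ Ei E i, x e = ζ e := by
  by_contra! hne
  obtain ⟨e₀, he₀, hne⟩ := hne
  have hlt : x e₀ < ζ e₀ := (hxζ e₀ he₀).lt_of_ne hne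
  have hsum_lt : ∀ {F}, e₀ ∈ F → F ⊆ Ei E i → vsum x F < vsum ζ F := fun he₀F hF =>
    Finset.sum_lt_sum (fun e he => hxζ e (hF he)) ⟨e₀, he₀F, hlt⟩
  have hcap : vsum x (Ei E i) < d i := (hsum_lt he₀ subset_rfl).trans_le
    ((hζ.2.2 _ subset_rfl).trans (clinchRank_le hfj hw hd subset_rfl))
  have hseeds : {e₀} ⊆ E := Finset.singleton_subset_iff.2 (Ei_subset i he₀)
  set A := augCut E fj w x (E \ Ei E i) {e₀}
  obtain ⟨hAE, htA⟩ := isTight_augCut hfj hx (T := E \ Ei E i) (seeds := {e₀})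
    fun s hs e h => exists_tight_of_reach_of_isMaxOn_Ei hfj hw hx hxζ hmax hcap he₀ hlt
      (Finset.mem_singleton.1 hs ▸ h)
  have he₀A := mem_augCut_of_reach Finset.sdiff_subset hseeds (Finset.mem_singleton_self e₀)
    (Relation.ReflTransGen.refl (r := AugStep E fj w x (E \ Ei E i)))
  have hclosed : ∀ f ∈ A, 0 < x f → f.1 ≠ i → Ei E f.1 ⊆ A := fun f hf hxf hfi _ he' =>
    mem_augCut_of_pos Finset.sdiff_subset hseeds hf hxf
      (Finset.mem_sdiff.2 ⟨hAE hf, fun h => hfi (mem_Ei.1 h).2⟩) (Ei_subset_sdiff_Ei hfi he')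
      (mem_Ei.1 he').2
  have h1 := clinchRank_inter_le_vsum hfj hw hd hx hAE htA hclosed
  have h2 := hζ.2.2 (Ei E i ∩ A) Finset.inter_subset_left
  have h3 := hsum_lt (Finset.mem_inter.2 ⟨he₀, he₀A⟩) Finset.inter_subset_left
  unfold vsum at h1 h3
  linarith

lemma exists_memPwd_eqOn_Ei (hfj : ∀ j, IsMonoSubmodular (Ej E j) (fj j)) (hw : memP E fj w)
    (hd : ∀ k, 0 ≤ d k) (hζ : ζ ∈ polymatroid (Ei E i) (clinchRank E fj w d i))
    {x₀ : B × S → ℝ} (hx₀ : memPwd E fj w d x₀) (hx₀i : ∀ e ∈ Ei E i, x₀ e = 0) :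
    ∃ x, memPwd E fj w d x ∧ (∀ e ∈ Ei E i, x e = ζ e) ∧
      ∀ k ≠ i, vsum x (Ei E k) = vsum x₀ (Ei E k) := by
  set C := {y | memPwd E fj w d y} ∩
    ({y | ∀ e ∈ Ei E i, y e ≤ ζ e} ∩ {y | ∀ k ≠ i, vsum y (Ei E k) = vsum x₀ (Ei E k)})
  have hC : IsClosed C := by
    refine isClosed_setOf_memPwd.inter (IsClosed.inter ?_ ?_) <;>
      simp only [vsum, Set.ofPred_forall] <;>
      repeat' first
        | (apply isClosed_iInter; intro)
        | apply isClosed_le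
        | apply isClosed_eq
        | fun_prop
  obtain ⟨x, ⟨hx, hxζ, hxk⟩, hmax⟩ := exists_isMaxOn_vsum (fun y hy => hy.1) hC
    ⟨x₀, hx₀, fun e he => hx₀i e he ▸ hζ.1 e, fun k _ => rfl⟩ (Ei E i)
  exact ⟨x, hx, eqOn_Ei_of_isMaxOn hfj hw hd hζ hx hxζ fun y hy hyζ hyk =>
    hmax y ⟨hy, hyζ, fun k hk => (hyk k hk).trans (hxk k hk)⟩, hxk⟩

lemma clinchP_subset_polymatroid (hw : memP E fj w) (hd : ∀ k, 0 ≤ d k) :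
    ClinchP E fj w d i ⊆ polymatroid (Ei E i) (clinchRank E fj w d i) := by
  rintro ξ ⟨hξ0, hξE, hP⟩
  refine ⟨hξ0, hξE, fun F hF => ?_⟩
  -- The buyer totals of an optimal `x₀` on `E \ E_i` lie in `P^i(0) = P^i(ξ)`.
  obtain ⟨x₀, hx₀, hx₀R, hx₀v⟩ := exists_memPwd_vsum_eq_fwd hw hd (E \ Ei E i)
  have hu : (fun k => if k = i then 0 else vsum x₀ (Ei E k)) ∈ PiWd E fj w d i ξ := by
    rw [hP]
    refine ⟨if_pos rfl, fun k => ?_, x₀, hx₀,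
      fun e he => hx₀R e fun h => (Finset.mem_sdiff.1 h).2 he, fun k hk => (if_neg hk).symm⟩
    dsimp only
    split_ifs
    exacts [le_rfl, Finset.sum_nonneg fun e _ => hx₀.1 e]
  obtain ⟨-, -, x, hx, hxξ, hxk⟩ := hu
  have hxR : vsum x (E \ Ei E i) = vsum x₀ (E \ Ei E i) := by
    rw [vsum_sdiff_Ei, vsum_sdiff_Ei]
    exact Finset.sum_congr rfl fun k hk => by
      simpa [Finset.ne_of_mem_erase hk] using hxk k (Finset.ne_of_mem_erase hk)
  have hxF : vsum x F = vsum ξ F := Finset.sum_congr rfl fun e he => hxξ e (hF he)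
  have hdisj : Disjoint F (E \ Ei E i) :=
    Finset.disjoint_left.2 fun e heF heR => (Finset.mem_sdiff.1 heR).2 (hF heF)
  have := vsum_le_fwd hx (F ∪ (E \ Ei E i))
  rw [vsum, Finset.sum_union hdisj, ← vsum, ← vsum, hxR, hx₀v, hxF] at this
  change vsum ξ F ≤ clinchRank E fj w d i F
  rw [clinchRank]
  linarith

lemma polymatroid_subset_clinchP (hfj : ∀ j, IsMonoSubmodular (Ej E j) (fj j))
    (hw : memP E fj w) (hd : ∀ k, 0 ≤ d k) :
    polymatroid (Ei E i) (clinchRank E fj w d i) ⊆ ClinchP E fj w d i := by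
  intro ζ hζ
  refine ⟨hζ.1, hζ.2.1, Set.Subset.antisymm ?_ ?_⟩
  · rintro u ⟨hui, hu0, x, hx, -, hxk⟩
    refine ⟨hui, hu0, _, memPwd_indicator hw hx (E \ Ei E i),
      fun e he => Set.indicator_of_notMem (fun h => (Finset.mem_sdiff.1 h).2 he) x,
      fun k hk => ?_⟩
    rw [vsum_indicator, Finset.inter_eq_left.2 (Ei_subset_sdiff_Ei hk)]
    exact hxk k hk
  · rintro u ⟨hui, hu0, x₀, hx₀, hx₀i, hx₀k⟩
    obtain ⟨x, hx, hxζ, hxk⟩ := exists_memPwd_eqOn_Ei hfj hw hd hζ hx₀ hx₀i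
    exact ⟨hui, hu0, x, hx, hxζ, fun k hk => (hxk k hk).trans (hx₀k k hk)⟩

theorem clinchP_eq_polymatroid (hfj : ∀ j, IsMonoSubmodular (Ej E j) (fj j))
    (hw : memP E fj w) (hd : ∀ k, 0 ≤ d k) :
    ClinchP E fj w d i = polymatroid (Ei E i) (clinchRank E fj w d i) :=
  (clinchP_subset_polymatroid hw hd).antisymm (polymatroid_subset_clinchP hfj hw hd)

end Exchange

/-- a maximal element `ξ` of the clinching polytope satisfies
`ξ(E_i) = f_{w,d}(E) - f_{w,d}(E \ E_i)`. -/
theorem maximal_clinch_amount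
    (E : Finset (B × S)) (fj : S → Finset (B × S) → ℝ)
    (hfj : ∀ j : S, IsMonoSubmodular (Ej E j) (fj j))
    (w : B × S → ℝ) (hw : memP E fj w)
    (d : B → ℝ) (hd : ∀ i : B, 0 ≤ d i)
    (i : B) (ξ : B × S → ℝ) (hmem : ξ ∈ ClinchP E fj w d i)
    (hmax : ∀ ξ' ∈ ClinchP E fj w d i, (∀ e, ξ e ≤ ξ' e) → ξ' = ξ) :
    vsum ξ (Ei E i) = fwd E fj w d E - fwd E fj w d (E \ Ei E i) := by
  have hmaximal : Maximal (· ∈ polymatroid (Ei E i) (clinchRank E fj w d i)) ξ := by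
    rw [← clinchP_eq_polymatroid hfj hw hd]
    exact ⟨hmem, fun ξ' hξ' hle => (hmax ξ' hξ' hle).le⟩
  have := sum_eq_of_maximal_mem_polymatroid (submodularOn_clinchRank hfj hw hd)
    (by simp [clinchRank]) hmaximal
  rwa [clinchRank, Finset.union_sdiff_of_subset (Ei_subset i)] at this

end TwoSidedMarket
end
end

section
/- For Y ⊆ N define g̃_{w,d}(Y) := min_{Z ⊆ Y} ( f_w(E_Z) + d(Y \ Z) ), and call Z ⊆ Y a minimizer for Y if it attains this minimum. Then for X ⊆ N the following are equivalent: (i) X is the unique inclusion-minimal minimizer for X itself (in which case g̃_{w,d}(X) = f_w(E_X)); (ii) X is an inclusion-minimal minimizer for some Y with X ⊆ Y ⊆ N. -/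
open Finset

noncomputable section

namespace TwoSidedMarket

variable {B S : Type*} [Fintype B] [Fintype S] [DecidableEq B] [DecidableEq S]

/-- `g̃_{w,d}(Y) := min_{Z ⊆ Y} (f_w(E_Z) + d(Y \ Z))`. -/
def gTil (E : Finset (B × S)) (fj : S → Finset (B × S) → ℝ)
    (w : B × S → ℝ) (d : B → ℝ) (Y : Finset B) : ℝ :=
  Y.powerset.inf' ⟨∅, Finset.empty_mem_powerset _⟩
    (fun Z => fw E fj w (EX E Z) + ∑ k ∈ Y \ Z, d k)

/-- `Z` is a minimizer for `Y` in the definition of `g̃_{w,d}(Y)`. -/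
def IsMinimizer (E : Finset (B × S)) (fj : S → Finset (B × S) → ℝ)
    (w : B × S → ℝ) (d : B → ℝ) (Z Y : Finset B) : Prop :=
  Z ⊆ Y ∧ fw E fj w (EX E Z) + ∑ k ∈ Y \ Z, d k = gTil E fj w d Y

/-- `Z` is an inclusion-minimal minimizer for `Y`. -/
def IsMinimalMinimizer (E : Finset (B × S)) (fj : S → Finset (B × S) → ℝ)
    (w : B × S → ℝ) (d : B → ℝ) (Z Y : Finset B) : Prop :=
  IsMinimizer E fj w d Z Y ∧
    ∀ Z' : Finset B, IsMinimizer E fj w d Z' Y → Z' ⊆ Z → Z' = Z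

/-!
If some minimizer for `Y` lies inside `X ⊆ Y`, then `g̃(Y) = g̃(X) + d(Y \ X)`, and on subsets
`Z ⊆ X` the objectives for `X` and for `Y` differ by the same constant `d(Y \ X)`. So the
minimizers for `X` are exactly the minimizers for `Y` contained in `X`, and a minimal minimizer
`X` for `Y` is the only minimizer for `X` itself.
-/

section Minimizers

omit [Fintype B]

variable {E : Finset (B × S)} {fj : S → Finset (B × S) → ℝ} {w : B × S → ℝ} {d : B → ℝ}

lemma sum_sdiff_eq_sum_sdiff_add_sum_sdiff {Z X Y : Finset B} (hZX : Z ⊆ X) (hXY : X ⊆ Y) :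
    ∑ k ∈ Y \ Z, d k = ∑ k ∈ X \ Z, d k + ∑ k ∈ Y \ X, d k := by
  have hYZ := Finset.sum_sdiff (f := d) (hZX.trans hXY)
  have hXZ := Finset.sum_sdiff (f := d) hZX
  have hYX := Finset.sum_sdiff (f := d) hXY
  linarith

lemma gTil_le {Z Y : Finset B} (hZY : Z ⊆ Y) :
    gTil E fj w d Y ≤ fw E fj w (EX E Z) + ∑ k ∈ Y \ Z, d k :=
  Finset.inf'_le _ (Finset.mem_powerset.mpr hZY)

lemma gTil_eq_gTil_add_of_isMinimizer {Z₀ X Y : Finset B} (hZ₀ : IsMinimizer E fj w d Z₀ Y)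
    (hZ₀X : Z₀ ⊆ X) (hXY : X ⊆ Y) :
    gTil E fj w d Y = gTil E fj w d X + ∑ k ∈ Y \ X, d k := by
  apply le_antisymm
  · rw [← sub_le_iff_le_add]
    refine Finset.le_inf' _ _ fun Z hZ => ?_
    have hZX := Finset.mem_powerset.mp hZ
    have := gTil_le (E := E) (fj := fj) (w := w) (d := d) (hZX.trans hXY)
    rw [sum_sdiff_eq_sum_sdiff_add_sum_sdiff hZX hXY] at this
    linarith
  · have := gTil_le (E := E) (fj := fj) (w := w) (d := d) hZ₀X
    rw [← hZ₀.2, sum_sdiff_eq_sum_sdiff_add_sum_sdiff hZ₀X hXY]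
    linarith

lemma isMinimizer_iff_of_isMinimizer {Z₀ Z X Y : Finset B} (hZ₀ : IsMinimizer E fj w d Z₀ Y)
    (hZ₀X : Z₀ ⊆ X) (hXY : X ⊆ Y) (hZX : Z ⊆ X) :
    IsMinimizer E fj w d Z X ↔ IsMinimizer E fj w d Z Y := by
  simp only [IsMinimizer, hZX, hZX.trans hXY, true_and,
    gTil_eq_gTil_add_of_isMinimizer hZ₀ hZ₀X hXY, sum_sdiff_eq_sum_sdiff_add_sum_sdiff hZX hXY,
    ← add_assoc, add_left_inj]

lemma IsMinimalMinimizer.isMinimizer_self {X Y : Finset B}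
    (hX : IsMinimalMinimizer E fj w d X Y) : IsMinimizer E fj w d X X :=
  (isMinimizer_iff_of_isMinimizer hX.1 subset_rfl hX.1.1 subset_rfl).mpr hX.1

lemma IsMinimalMinimizer.eq_of_isMinimizer {Z X Y : Finset B}
    (hX : IsMinimalMinimizer E fj w d X Y) (hZ : IsMinimizer E fj w d Z X) : Z = X :=
  hX.2 Z ((isMinimizer_iff_of_isMinimizer hX.1 subset_rfl hX.1.1 hZ.1).mp hZ) hZ.1

lemma IsMinimizer.gTil_self_eq {X : Finset B} (hX : IsMinimizer E fj w d X X) :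
    gTil E fj w d X = fw E fj w (EX E X) := by
  simpa using hX.2.symm

end Minimizers

theorem minimal_minimizer_characterization_general
    (E : Finset (B × S)) (fj : S → Finset (B × S) → ℝ)
    (w : B × S → ℝ)
    (d : B → ℝ)
    (X : Finset B) :
    ((IsMinimalMinimizer E fj w d X X ∧
        ∀ Z : Finset B, IsMinimalMinimizer E fj w d Z X → Z = X) ↔
      ∃ Y : Finset B, X ⊆ Y ∧ IsMinimalMinimizer E fj w d X Y) ∧
    (IsMinimalMinimizer E fj w d X X → gTil E fj w d X = fw E fj w (EX E X)) := by
  refine ⟨⟨fun hX => ⟨X, subset_rfl, hX.1⟩, ?_⟩, fun hX => hX.1.gTil_self_eq⟩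
  rintro ⟨Y, -, hXmin⟩
  exact ⟨⟨hXmin.isMinimizer_self, fun Z hZ _ => hXmin.eq_of_isMinimizer hZ⟩,
    fun Z hZ => hXmin.eq_of_isMinimizer hZ.1⟩

/-- `X` is the unique minimal minimizer for `X` itself iff `X` is a
minimal minimizer for some `Y ⊇ X`; and in the former case `g̃_{w,d}(X) = f_w(E_X)`. -/
theorem minimal_minimizer_characterization
    (E : Finset (B × S)) (fj : S → Finset (B × S) → ℝ)
    (hfj : ∀ j : S, IsMonoSubmodular (Ej E j) (fj j))
    (w : B × S → ℝ) (hw : memP E fj w)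
    (d : B → ℝ) (hd : ∀ i : B, 0 ≤ d i)
    (X : Finset B) :
    ((IsMinimalMinimizer E fj w d X X ∧
        ∀ Z : Finset B, IsMinimalMinimizer E fj w d Z X → Z = X) ↔
      ∃ Y : Finset B, X ⊆ Y ∧ IsMinimalMinimizer E fj w d X Y) ∧
    (IsMinimalMinimizer E fj w d X X → gTil E fj w d X = fw E fj w (EX E X)) :=
  minimal_minimizer_characterization_general E fj w d X

end TwoSidedMarket
end
end

section
/- Let S be a finite set, t a positive integer with t ≤ |S|, and q : S → [0, 1] a function with Σ_{i∈S} q_i = t. Then there exists a probability distribution p over the t-element subsets of S (i.e., p(X) ≥ 0 for each t-element subset X ⊆ S and Σ_X p(X) = 1) such that for every i ∈ S, Σ_{X : i ∈ X} p(X) = q_i. -/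
/-!
The vectors `q` satisfying the hypotheses form the hypersimplex, a compact convex set, so by
Krein–Milman it is the convex hull of its extreme points. An extreme point has no fractional
coordinate: since the coordinates sum to the integer `t`, a fractional coordinate `q i` comes
with a second one `q j`, and moving mass `±ε` between `i` and `j` exhibits `q` as a midpoint.
A `0/1` vector summing to `t` is the indicator of a `t`-set `A`, realised by the point mass at
`A`, and the set of realisable `q` is convex because the conditions on `p` are linear.
-/

open Finset

theorem Set.Finite.convexHull_extremePoints_eq {E : Type*} [AddCommGroup E] [Module ℝ E]
    [TopologicalSpace E] [T2Space E] [IsTopologicalAddGroup E] [ContinuousSMul ℝ E]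
    [LocallyConvexSpace ℝ E] {s : Set E} (hcomp : IsCompact s) (hconv : Convex ℝ s)
    (hfin : (s.extremePoints ℝ).Finite) :
    convexHull ℝ (s.extremePoints ℝ) = s := by
  rw [← (hfin.isClosed_convexHull ℝ).closure_eq, closure_convexHull_extremePoints hcomp hconv]

theorem eq_zero_of_mem_extremePoints_of_add_mem_of_sub_mem {E : Type*} [AddCommGroup E]
    [Module ℝ E] {s : Set E} {x v : E} (hx : x ∈ s.extremePoints ℝ) (hadd : x + v ∈ s)
    (hsub : x - v ∈ s) : v = 0 := by
  have hmid : x ∈ openSegment ℝ (x + v) (x - v) :=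
    ⟨1 / 2, 1 / 2, by norm_num, by norm_num, by norm_num, by
      rw [smul_add, smul_sub, add_add_sub_cancel, ← add_smul]; norm_num⟩
  simpa using (mem_extremePoints.mp hx).2 _ hadd _ hsub hmid |>.1

theorem Finset.sum_eq_card_filter_eq_one {ι R : Type*} [AddCommMonoidWithOne R] [DecidableEq R]
    {s : Finset ι} {f : ι → R}
    (hf : ∀ i ∈ s, f i = 0 ∨ f i = 1) : ∑ i ∈ s, f i = #{i ∈ s | f i = 1} := by
  rw [← sum_boole]
  refine sum_congr rfl fun i hi => ?_
  rcases hf i hi with h | h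
  · rw [h, eq_comm, ite_eq_right_iff]; exact Eq.symm
  · rw [h, if_pos rfl]

section Hypersimplex

variable {S : Type*} [Fintype S]

variable (S) in
def hypersimplex (t : ℕ) : Set (S → ℝ) :=
  Set.univ.pi (fun _ => Set.Icc 0 1) ∩ {q | ∑ i, q i = t}

theorem isCompact_hypersimplex (t : ℕ) : IsCompact (hypersimplex S t) :=
  (isCompact_univ_pi fun _ => isCompact_Icc).inter_right
    (isClosed_eq (continuous_finsetSum _ fun i _ => continuous_apply i) continuous_const)

theorem convex_hypersimplex (t : ℕ) : Convex ℝ (hypersimplex S t) :=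
  (convex_pi fun _ _ => convex_Icc 0 1).inter <|
    convex_hyperplane ⟨fun _ _ => sum_add_distrib, fun _ _ => (mul_sum _ _ _).symm⟩ _

theorem exists_ne_mem_Ioo_of_mem_hypersimplex {t : ℕ} {q : S → ℝ} (hq : q ∈ hypersimplex S t)
    {i : S} (hi : q i ∈ Set.Ioo 0 1) : ∃ j ≠ i, q j ∈ Set.Ioo 0 1 := by
  classical
  by_contra! h
  have hint : ∀ j ∈ univ.erase i, q j = 0 ∨ q j = 1 := fun j hj =>
    (Set.Icc_sdiff_Ioo_same zero_le_one).subset ⟨hq.1 j (Set.mem_univ j), h j (ne_of_mem_erase hj)⟩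
  set m := #{j ∈ univ.erase i | q j = 1}
  have hqi : q i = t - m := by
    rw [← hq.2, ← add_sum_erase _ _ (mem_univ i), sum_eq_card_filter_eq_one hint]
    ring
  have hmt : m < t := by exact_mod_cast (show (m : ℝ) < t by linarith [hi.1])
  have htm : t < m + 1 := by exact_mod_cast (show (t : ℝ) < m + 1 by linarith [hi.2])
  omega

theorem add_smul_single_sub_single_mem_hypersimplex [DecidableEq S] {t : ℕ} {q : S → ℝ}
    (hq : q ∈ hypersimplex S t) {i j : S} (hij : i ≠ j) {c : ℝ}
    (hi : q i + c ∈ Set.Icc 0 1) (hj : q j - c ∈ Set.Icc 0 1) :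
    q + c • (Pi.single i 1 - Pi.single j 1) ∈ hypersimplex S t := by
  refine ⟨fun k _ => ?_, ?_⟩
  · rcases eq_or_ne k i with rfl | hki
    · simpa [hij] using hi
    rcases eq_or_ne k j with rfl | hkj
    · simpa [hki, sub_eq_add_neg] using hj
    simpa [hki, hkj] using hq.1 k (Set.mem_univ k)
  · have hsum : ∑ k, q k = t := hq.2
    simp [sum_add_distrib, ← mul_sum, sum_sub_distrib, hsum]

theorem notMem_extremePoints_hypersimplex [DecidableEq S] {t : ℕ} {q : S → ℝ}
    (hq : q ∈ hypersimplex S t) {i j : S} (hij : i ≠ j) (hi : q i ∈ Set.Ioo 0 1)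
    (hj : q j ∈ Set.Ioo 0 1) : q ∉ (hypersimplex S t).extremePoints ℝ := by
  intro hext
  set ε := min (min (q i) (1 - q i)) (min (q j) (1 - q j))
  have hε : 0 < ε := by
    simp only [ε, lt_min_iff, sub_pos]
    exact ⟨hi, hj⟩
  have hεi : ε ≤ q i ∧ ε ≤ 1 - q i := by simp [ε]
  have hεj : ε ≤ q j ∧ ε ≤ 1 - q j := by simp [ε]
  have hadd := add_smul_single_sub_single_mem_hypersimplex hq hij (c := ε)
    ⟨by linarith, by linarith⟩ ⟨by linarith, by linarith⟩
  have hsub := add_smul_single_sub_single_mem_hypersimplex hq hij (c := -ε)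
    ⟨by linarith, by linarith⟩ ⟨by linarith, by linarith⟩
  rw [neg_smul, ← sub_eq_add_neg] at hsub
  have hεi_eq := congr_fun (eq_zero_of_mem_extremePoints_of_add_mem_of_sub_mem hext hadd hsub) i
  simp only [Pi.smul_apply, Pi.sub_apply, Pi.single_eq_same, Pi.single_eq_of_ne hij,
    sub_zero, smul_eq_mul, mul_one, Pi.zero_apply] at hεi_eq
  exact hε.ne' hεi_eq

theorem extremePoints_hypersimplex_subset (t : ℕ) :
    (hypersimplex S t).extremePoints ℝ ⊆ Set.univ.pi fun _ => {0, 1} := by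
  classical
  intro q hext i _
  have hq := extremePoints_subset hext
  refine (Set.Icc_sdiff_Ioo_same zero_le_one).subset ⟨hq.1 i (Set.mem_univ i), fun hi => ?_⟩
  obtain ⟨j, hji, hj⟩ := exists_ne_mem_Ioo_of_mem_hypersimplex hq hi
  exact notMem_extremePoints_hypersimplex hq hji.symm hi hj hext

theorem finite_extremePoints_hypersimplex (t : ℕ) :
    ((hypersimplex S t).extremePoints ℝ).Finite :=
  (Set.Finite.pi fun _ => Set.toFinite _).subset (extremePoints_hypersimplex_subset t)

theorem convexHull_extremePoints_hypersimplex (t : ℕ) :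
    convexHull ℝ ((hypersimplex S t).extremePoints ℝ) = hypersimplex S t :=
  (finite_extremePoints_hypersimplex t).convexHull_extremePoints_eq
    (isCompact_hypersimplex t) (convex_hypersimplex t)

variable [DecidableEq S]

def IsInclusionProbs (t : ℕ) (q : S → ℝ) : Prop :=
  ∃ p : Finset S → ℝ,
    (∀ X : Finset S, 0 ≤ p X) ∧
    (∀ X : Finset S, X.card ≠ t → p X = 0) ∧
    (∑ X ∈ Finset.univ.filter (fun X : Finset S => X.card = t), p X) = 1 ∧
    ∀ i : S,
      (∑ X ∈ Finset.univ.filter (fun X : Finset S => X.card = t ∧ i ∈ X), p X) = q i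

theorem convex_setOf_isInclusionProbs (t : ℕ) : Convex ℝ {q : S → ℝ | IsInclusionProbs t q} := by
  rintro q₁ ⟨p₁, hp₁, hz₁, hs₁, hm₁⟩ q₂ ⟨p₂, hp₂, hz₂, hs₂, hm₂⟩ a b ha hb hab
  refine ⟨a • p₁ + b • p₂, fun X => ?_, fun X hX => ?_, ?_, fun i => ?_⟩
  · simp only [Pi.add_apply, Pi.smul_apply, smul_eq_mul]
    have := hp₁ X; have := hp₂ X
    positivity
  · simp [hz₁ X hX, hz₂ X hX]
  · simp only [Pi.add_apply, Pi.smul_apply, smul_eq_mul, sum_add_distrib, ← mul_sum, hs₁, hs₂,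
      mul_one, hab]
  · simp only [Pi.add_apply, Pi.smul_apply, smul_eq_mul, sum_add_distrib, ← mul_sum, hm₁, hm₂]

theorem isInclusionProbs_of_forall_eq_zero_or_one {t : ℕ} {q : S → ℝ}
    (hq : ∀ i, q i = 0 ∨ q i = 1) (hsum : ∑ i, q i = t) : IsInclusionProbs t q := by
  set A : Finset S := {i | q i = 1}
  have hA : #A = t := by
    exact_mod_cast (sum_eq_card_filter_eq_one fun i _ => hq i).symm.trans hsum
  refine ⟨Pi.single A 1, fun X => ?_, fun X hX => ?_, ?_, fun i => ?_⟩
  · rw [Pi.single_apply]; split_ifs <;> norm_num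
  · exact Pi.single_eq_of_ne (by rintro rfl; exact hX hA) _
  · simp [sum_pi_single', hA]
  · rcases hq i with h | h <;> simp [sum_pi_single', A, hA, h]

theorem hypersimplex_subset_setOf_isInclusionProbs (t : ℕ) :
    hypersimplex S t ⊆ {q | IsInclusionProbs t q} := by
  rw [← convexHull_extremePoints_hypersimplex]
  refine convexHull_min (fun q hq => ?_) (convex_setOf_isInclusionProbs t)
  have hq01 := extremePoints_hypersimplex_subset t hq
  exact isInclusionProbs_of_forall_eq_zero_or_one (fun i => hq01 i (Set.mem_univ i))
    (extremePoints_subset hq).2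

end Hypersimplex

theorem exists_distribution_on_subsets_general {S : Type*} [Fintype S] [DecidableEq S]
    (t : ℕ)
    (q : S → ℝ) (hq0 : ∀ i, 0 ≤ q i) (hq1 : ∀ i, q i ≤ 1)
    (hsum : ∑ i, q i = (t : ℝ)) :
    ∃ p : Finset S → ℝ,
      (∀ X : Finset S, 0 ≤ p X) ∧
      (∀ X : Finset S, X.card ≠ t → p X = 0) ∧
      (∑ X ∈ Finset.univ.filter (fun X : Finset S => X.card = t), p X) = 1 ∧
      ∀ i : S,
        (∑ X ∈ Finset.univ.filter (fun X : Finset S => X.card = t ∧ i ∈ X), p X) = q i :=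
  hypersimplex_subset_setOf_isInclusionProbs t ⟨fun i _ => ⟨hq0 i, hq1 i⟩, hsum⟩

/-- if `q : S → [0,1]` sums to `t`, there is a probability distribution
`p` on the `t`-element subsets of `S` with `Σ_{X : i ∈ X} p(X) = q_i` for every `i`. -/
theorem exists_distribution_on_subsets {S : Type*} [Fintype S] [DecidableEq S]
    (t : ℕ) (ht : 0 < t) (htn : t ≤ Fintype.card S)
    (q : S → ℝ) (hq0 : ∀ i, 0 ≤ q i) (hq1 : ∀ i, q i ≤ 1)
    (hsum : ∑ i, q i = (t : ℝ)) :
    ∃ p : Finset S → ℝ,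
      (∀ X : Finset S, 0 ≤ p X) ∧
      (∀ X : Finset S, X.card ≠ t → p X = 0) ∧
      (∑ X ∈ Finset.univ.filter (fun X : Finset S => X.card = t), p X) = 1 ∧
      ∀ i : S,
        (∑ X ∈ Finset.univ.filter (fun X : Finset S => X.card = t ∧ i ∈ X), p X) = q i :=
  exists_distribution_on_subsets_general t q hq0 hq1 hsum
end

section
/- Let S be a finite set with |S| = n and let β_1 ≥ β_2 ≥ ⋯ ≥ β_n ≥ 0 be real numbers, and let Q := {x ∈ ℝ_{≥0}^S : Σ_{i∈A} x_i ≤ Σ_{l=1}^{|A|} β_l for all A ⊆ S}. Then the extreme points of Q are exactly the vectors ξ ∈ ℝ_{≥0}^S such that, for some subset S' ⊆ S and some bijection ψ : S' → {1, 2, …, |S'|}, one has ξ_i = β_{ψ(i)} for i ∈ S' and ξ_i = 0 for i ∉ S'. -/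
/-!
The polymatroid `Q` is a polyhedron, so `ξ ∈ Q` is extreme iff the only direction `d` that keeps
every constraint active at `ξ` active is `d = 0`.

For a vector of the stated form the prefix sets `ψ⁻¹ [0, k)` are tight, and their successive
differences force `d = 0` on `S'`. Conversely, at an extreme point the tight sets form a lattice
(the rank `k ↦ β₀ + ⋯ + β_{k-1}` is concave because `β` is antitone), they cover the support, and
they separate any two points of it: otherwise `ξ` could be moved along `eᵢ` or `eᵢ - eⱼ`. So the
support is tight, and peeling off one point at a time along a maximal chain of tight subsets
gives `ξ i = β k` for the point removed from a tight set of size `k + 1`.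
-/

open Finset Filter Topology

section Polyhedron

variable {E K : Type*} [AddCommGroup E] [Module ℝ E] [Finite K]
  {g : K → E →ₗ[ℝ] ℝ} {c : K → ℝ} {x : E}

lemma eventually_forall_add_smul_le {d : E} (hx : ∀ k, g k x ≤ c k)
    (hd : ∀ k, g k x = c k → g k d ≤ 0) :
    ∀ᶠ ε in 𝓝[>] (0 : ℝ), ∀ k, g k (x + ε • d) ≤ c k := by
  refine eventually_all.2 fun k => ?_
  simp only [map_add, map_smul, smul_eq_mul]
  rcases (hx k).lt_or_eq with hlt | heq
  · have hlim : Tendsto (fun ε : ℝ => g k x + ε * g k d) (𝓝 0) (𝓝 (g k x)) := by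
      have hcont : Continuous fun ε : ℝ => g k x + ε * g k d := by fun_prop
      simpa using hcont.tendsto 0
    exact eventually_nhdsWithin_of_eventually_nhds
      ((hlim.eventually (gt_mem_nhds hlt)).mono fun _ => le_of_lt)
  · filter_upwards [self_mem_nhdsWithin] with ε (hε : 0 < ε)
    nlinarith [hd k heq]

theorem mem_extremePoints_iff_forall_active_eq_zero :
    x ∈ Set.extremePoints ℝ {y | ∀ k, g k y ≤ c k} ↔
      (∀ k, g k x ≤ c k) ∧ ∀ d, (∀ k, g k x = c k → g k d = 0) → d = 0 := by
  constructor
  · rintro ⟨hx, hext⟩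
    refine ⟨hx, fun d hd => ?_⟩
    obtain ⟨ε, ⟨hplus, hminus⟩, hε⟩ :=
      (((eventually_forall_add_smul_le hx fun k hk => (hd k hk).le).and
        (eventually_forall_add_smul_le (d := -d) hx fun k hk => by simp [hd k hk])).and
        self_mem_nhdsWithin).exists
    have hseg : x ∈ openSegment ℝ (x + ε • d) (x + ε • -d) :=
      ⟨1 / 2, 1 / 2, by norm_num, by norm_num, by norm_num, by module⟩
    have h := hext hplus hminus hseg
    rw [add_eq_left, smul_eq_zero] at h
    exact h.resolve_left hε.ne'
  · rintro ⟨hx, hker⟩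
    refine ⟨hx, fun y hy z hz ⟨a, b, ha, hb, hab, hxyz⟩ => ?_⟩
    subst hxyz
    have hactive : ∀ k, g k (a • y + b • z) = c k → g k y = c k := by
      intro k hk
      simp only [map_add, map_smul, smul_eq_mul] at hk
      nlinarith [hy k, mul_le_mul_of_nonneg_left (hz k) hb.le, congrArg (· * c k) hab]
    exact sub_eq_zero.1 (hker _ fun k hk => by rw [map_sub, hactive k hk, hk, sub_self])

end Polyhedron

section PrefixSums

variable {β : ℕ → ℝ} {n : ℕ}

lemma sum_le_sum_range_card (hβ : AntitoneOn β (Set.Iio n)) {T : Finset ℕ}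
    (hT : ∀ l ∈ T, l < n) : ∑ l ∈ T, β l ≤ ∑ l ∈ range T.card, β l := by
  induction T using Finset.induction_on_max with
  | empty => simp
  | insert a T hlt ih =>
    have haT : a ∉ T := fun ha => lt_irrefl a (hlt a ha)
    have hcard : T.card ≤ a := by simpa using card_le_card fun l hl => mem_range.2 (hlt l hl)
    have han : a < n := hT a (mem_insert_self a T)
    rw [sum_insert haT, card_insert_of_notMem haT, sum_range_succ, add_comm]
    exact add_le_add (ih fun l hl => hT l (mem_insert_of_mem hl))
      (hβ (hcard.trans_lt han) han hcard)

lemma sum_range_mono (hβ : ∀ l < n, 0 ≤ β l) {a b : ℕ} (hab : a ≤ b) (hb : b ≤ n) :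
    ∑ l ∈ range a, β l ≤ ∑ l ∈ range b, β l :=
  sum_le_sum_of_subset_of_nonneg (range_subset_range.2 hab) fun l hl _ =>
    hβ l ((mem_range.1 hl).trans_le hb)

lemma sum_Ico_le_sum_Ico (hβ : AntitoneOn β (Set.Iio n)) {a b m : ℕ} (hba : b ≤ a)
    (hm : a + m ≤ n) : ∑ l ∈ Ico a (a + m), β l ≤ ∑ l ∈ Ico b (b + m), β l := by
  rw [sum_Ico_eq_sum_range, sum_Ico_eq_sum_range, Nat.add_sub_cancel_left,
    Nat.add_sub_cancel_left]
  refine sum_le_sum fun l hl => ?_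
  have hlm := mem_range.1 hl
  exact hβ (by simp only [Set.mem_Iio]; omega) (by simp only [Set.mem_Iio]; omega) (by omega)

lemma sum_range_card_union_add_inter_le {S : Type*} [DecidableEq S]
    (hβ : AntitoneOn β (Set.Iio n)) {A B : Finset S} (hAB : (A ∪ B).card ≤ n) :
    ∑ l ∈ range (A ∪ B).card, β l + ∑ l ∈ range (A ∩ B).card, β l ≤
      ∑ l ∈ range A.card, β l + ∑ l ∈ range B.card, β l := by
  have hunion := card_union_add_card_inter A B
  have hA : A.card ≤ (A ∪ B).card := card_le_card subset_union_left
  have hB : (A ∩ B).card ≤ B.card := card_le_card inter_subset_right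
  have hAB' : (A ∩ B).card ≤ A.card := card_le_card inter_subset_left
  rw [← sum_range_add_sum_Ico _ hA, ← sum_range_add_sum_Ico _ hB]
  have := sum_Ico_le_sum_Ico hβ hAB' (m := (A ∪ B).card - A.card) (by omega)
  rw [Nat.add_sub_cancel' hA, show (A ∩ B).card + ((A ∪ B).card - A.card) = B.card by omega]
    at this
  linarith

end PrefixSums

/-- Two points missed by a maximal `M ∈ 𝒯` strictly inside `C` would be separated by some
`D ∈ 𝒯`, and then `(M ∪ D) ∩ C` would lie strictly between `M` and `C`. -/
lemma exists_erase_mem_of_separating {α : Type*} [DecidableEq α] {𝒯 : Set (Finset α)}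
    (h𝒯 : IsSublattice 𝒯) (hempty : ∅ ∈ 𝒯) {C : Finset α} (hC : C ∈ 𝒯) (hne : C.Nonempty)
    (hsep : ∀ i ∈ C, ∀ j ∈ C, i ≠ j → ∃ D ∈ 𝒯, ¬(i ∈ D ↔ j ∈ D)) :
    ∃ i ∈ C, C.erase i ∈ 𝒯 := by
  classical
  obtain ⟨M, hM, hmax⟩ := exists_max_image (C.ssubsets.filter (· ∈ 𝒯)) card
    ⟨∅, mem_filter.2 ⟨mem_ssubsets.2 (empty_ssubset.2 hne), hempty⟩⟩
  obtain ⟨hMC, hM𝒯⟩ : M ⊂ C ∧ M ∈ 𝒯 := by rwa [mem_filter, mem_ssubsets] at hM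
  obtain ⟨i, hiC, hiM⟩ := exists_of_ssubset hMC
  have hno_split : ∀ x ∈ C, x ∉ M → ∀ y ∈ C, y ∉ M → ∀ D ∈ 𝒯, x ∈ D → y ∉ D → False := by
    intro x hxC hxM y hyC hyM D hD hxD hyD
    have hE : (M ∪ D) ∩ C ∈ 𝒯 := h𝒯.infClosed (h𝒯.supClosed hM𝒯 hD) hC
    have hME : M ⊂ (M ∪ D) ∩ C := Finset.ssubset_iff_subset_ne.2
      ⟨subset_inter subset_union_left hMC.subset,
        fun h => hxM (h ▸ mem_inter.2 ⟨mem_union_right _ hxD, hxC⟩)⟩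
    have hEC : (M ∪ D) ∩ C ⊂ C := Finset.ssubset_iff_subset_ne.2 ⟨inter_subset_right, fun h => by
      have := (mem_inter.1 (h.symm ▸ hyC : y ∈ (M ∪ D) ∩ C)).1
      rcases mem_union.1 this with h' | h'
      exacts [hyM h', hyD h']⟩
    exact absurd (hmax _ (mem_filter.2 ⟨mem_ssubsets.2 hEC, hE⟩)) (not_le.2 (card_lt_card hME))
  have hrest : ∀ j ∈ C, j ∉ M → j = i := by
    intro j hjC hjM
    by_contra hji
    obtain ⟨D, hD, hsplit⟩ := hsep i hiC j hjC (Ne.symm hji)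
    by_cases hiD : i ∈ D
    · exact hno_split i hiC hiM j hjC hjM D hD hiD fun hjD => hsplit (iff_of_true hiD hjD)
    · exact hno_split j hjC hjM i hiC hiM D hD (by tauto) hiD
  refine ⟨i, hiC, ?_⟩
  convert hM𝒯 using 1
  refine Subset.antisymm (fun j hj => ?_) fun j hj => mem_erase.2 ⟨?_, hMC.subset hj⟩
  · obtain ⟨hji, hjC⟩ := mem_erase.1 hj
    by_contra hjM
    exact hji (hrest j hjC hjM)
  · rintro rfl
    exact hiM hj

lemma Set.BijOn.filter_lt_range {α : Type*} {s : Finset α} {ψ : α → ℕ} {m k : ℕ}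
    (hψ : BijOn ψ s (Finset.range m)) (hk : k ≤ m) :
    BijOn ψ (s.filter (ψ · < k)) (Finset.range k) := by
  refine ⟨fun j hj => by simpa using (mem_filter.1 hj).2,
    hψ.injOn.mono (by simp only [coe_filter]; exact Set.sep_subset _ _), fun l hl => ?_⟩
  have hlk : l < k := by simpa using hl
  obtain ⟨j, hj, rfl⟩ := hψ.surjOn (show l ∈ (Finset.range m : Set ℕ) by simp; omega)
  exact ⟨j, by simpa [hlk] using hj, rfl⟩

section Polymatroid

variable {S : Type*} {β : ℕ → ℝ} {ξ : S → ℝ} {S' : Finset S} {ψ : S → ℕ}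

def polymatroid (β : ℕ → ℝ) : Set (S → ℝ) :=
  {x | (∀ i, 0 ≤ x i) ∧ ∀ A : Finset S, ∑ i ∈ A, x i ≤ ∑ l ∈ range A.card, β l}

def tightSets (β : ℕ → ℝ) (x : S → ℝ) : Set (Finset S) :=
  {A | ∑ i ∈ A, x i = ∑ l ∈ range A.card, β l}

@[simp]
lemma mem_tightSets {x : S → ℝ} {A : Finset S} :
    A ∈ tightSets β x ↔ ∑ i ∈ A, x i = ∑ l ∈ range A.card, β l :=
  Iff.rfl

lemma empty_mem_tightSets : (∅ : Finset S) ∈ tightSets β ξ := by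
  simp

def polymatroidConstraint : S ⊕ Finset S → (S → ℝ) →ₗ[ℝ] ℝ
  | .inl i => -LinearMap.proj i
  | .inr A => ∑ i ∈ A, LinearMap.proj i

def polymatroidBound (β : ℕ → ℝ) : S ⊕ Finset S → ℝ
  | .inl _ => 0
  | .inr A => ∑ l ∈ range A.card, β l

lemma polymatroid_eq_setOf_constraint_le :
    polymatroid β = {x : S → ℝ | ∀ k, polymatroidConstraint k x ≤ polymatroidBound β k} := by
  ext x
  simp [polymatroid, Sum.forall, polymatroidConstraint, polymatroidBound]

lemma filter_lt_mem_tightSets (hψ : Set.BijOn ψ S' (range S'.card))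
    (hval : ∀ i ∈ S', ξ i = β (ψ i)) {k : ℕ} (hk : k ≤ S'.card) :
    S'.filter (ψ · < k) ∈ tightSets β ξ := by
  have h := hψ.filter_lt_range hk
  rw [mem_tightSets, h.finsetCard_eq, card_range]
  exact sum_nbij ψ (fun _ hj => h.mapsTo hj) h.injOn h.surjOn
    fun j hj => hval j (mem_filter.1 hj).1

lemma exists_bijOn_range_of_mem_tightSets [DecidableEq S] (hlat : IsSublattice (tightSets β ξ))
    {C : Finset S} (hC : C ∈ tightSets β ξ)
    (hsep : ∀ i ∈ C, ∀ j ∈ C, i ≠ j → ∃ D ∈ tightSets β ξ, ¬(i ∈ D ↔ j ∈ D)) :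
    ∃ ψ : S → ℕ, Set.BijOn ψ C (range C.card) ∧ ∀ i ∈ C, ξ i = β (ψ i) := by
  induction C using Finset.strongInduction with
  | H C ih =>
  rcases C.eq_empty_or_nonempty with rfl | hne
  · exact ⟨fun _ => 0, by simp, by simp⟩
  obtain ⟨i, hi, herase⟩ :=
    exists_erase_mem_of_separating hlat empty_mem_tightSets hC hne hsep
  obtain ⟨ψ, hψ, hval⟩ := ih _ (erase_ssubset hi) herase fun j hj k hk =>
    hsep j (mem_of_mem_erase hj) k (mem_of_mem_erase hk)
  obtain ⟨k, hk⟩ := Nat.exists_eq_add_one.2 hne.card_pos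
  have hcard : (C.erase i).card = k := by rw [card_erase_of_mem hi, hk, Nat.add_sub_cancel]
  have hξi : ξ i = β k := by
    rw [mem_tightSets, ← add_sum_erase C ξ hi, hk, sum_range_succ] at hC
    rw [mem_tightSets, hcard] at herase
    linarith
  refine ⟨Function.update ψ i k, ?_, fun j hj => ?_⟩
  · have h := (hψ.congr fun j hj => (Function.update_of_ne (ne_of_mem_erase hj) k ψ).symm).insert
      (a := i) (by simp [hcard])
    rwa [Function.update_self, ← coe_insert, insert_erase hi, hcard, ← coe_insert,
      ← range_add_one, ← hk] at h
  · rcases eq_or_ne j i with rfl | hji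
    · rwa [Function.update_self]
    · rw [Function.update_of_ne hji]
      exact hval j (mem_erase.2 ⟨hji, hj⟩)

variable [Fintype S]

theorem mem_extremePoints_polymatroid_iff :
    ξ ∈ Set.extremePoints ℝ (polymatroid β) ↔ ξ ∈ polymatroid β ∧
      ∀ d : S → ℝ, (∀ i, ξ i = 0 → d i = 0) →
        (∀ A ∈ tightSets β ξ, ∑ i ∈ A, d i = 0) → d = 0 := by
  rw [polymatroid_eq_setOf_constraint_le, mem_extremePoints_iff_forall_active_eq_zero]
  simp [Sum.forall, polymatroidConstraint, polymatroidBound]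

lemma filter_ne_zero_mem_tightSets (hβ : ∀ l < Fintype.card S, 0 ≤ β l)
    (hξ : ξ ∈ polymatroid β) {A : Finset S} (hA : A ∈ tightSets β ξ) :
    A.filter (ξ · ≠ 0) ∈ tightSets β ξ := by
  have hle := hξ.2 (A.filter (ξ · ≠ 0))
  have hmono := sum_range_mono hβ (card_filter_le A (ξ · ≠ 0)) (card_le_univ A)
  simp only [mem_tightSets, sum_filter_ne_zero] at hA hle ⊢
  linarith

variable [DecidableEq S]

lemma isSublattice_tightSets (hβ : AntitoneOn β (Set.Iio (Fintype.card S)))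
    (hξ : ξ ∈ polymatroid β) : IsSublattice (tightSets β ξ) := by
  have key : ∀ ⦃A⦄, A ∈ tightSets β ξ → ∀ ⦃B⦄, B ∈ tightSets β ξ →
      A ∪ B ∈ tightSets β ξ ∧ A ∩ B ∈ tightSets β ξ := by
    intro A hA B hB
    have hsum := sum_union_inter (s₁ := A) (s₂ := B) (f := ξ)
    have hsub := sum_range_card_union_add_inter_le hβ (card_le_univ (A ∪ B))
    have hunion := hξ.2 (A ∪ B)
    have hinter := hξ.2 (A ∩ B)
    simp only [mem_tightSets] at hA hB ⊢
    constructor <;> linarith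
  exact ⟨fun A hA B hB => (key hA hB).1, fun A hA B hB => (key hA hB).2⟩

lemma exists_mem_tightSets_of_mem_extremePoints (hξ : ξ ∈ Set.extremePoints ℝ (polymatroid β))
    {i : S} (hi : ξ i ≠ 0) : ∃ A ∈ tightSets β ξ, i ∈ A := by
  by_contra! h
  have := (mem_extremePoints_polymatroid_iff.1 hξ).2 (Pi.single i 1)
    (fun j hj => Pi.single_eq_of_ne (by rintro rfl; exact hi hj) _)
    fun A hA => by simp [sum_pi_single', h A hA]
  simpa using congrFun this i

lemma exists_separating_mem_tightSets_of_mem_extremePoints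
    (hξ : ξ ∈ Set.extremePoints ℝ (polymatroid β)) {i j : S} (hi : ξ i ≠ 0) (hj : ξ j ≠ 0)
    (hij : i ≠ j) : ∃ D ∈ tightSets β ξ, ¬(i ∈ D ↔ j ∈ D) := by
  by_contra! h
  have := (mem_extremePoints_polymatroid_iff.1 hξ).2 (Pi.single i 1 - Pi.single j 1)
    (fun k hk => by
      rw [Pi.sub_apply, Pi.single_eq_of_ne (by rintro rfl; exact hi hk),
        Pi.single_eq_of_ne (by rintro rfl; exact hj hk), sub_zero])
    fun A hA => by simp [sum_sub_distrib, sum_pi_single', h A hA]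
  simpa [hij] using congrFun this i

theorem exists_bijOn_of_mem_extremePoints_polymatroid
    (hβ : AntitoneOn β (Set.Iio (Fintype.card S))) (hβ₀ : ∀ l < Fintype.card S, 0 ≤ β l)
    (hξ : ξ ∈ Set.extremePoints ℝ (polymatroid β)) :
    ∃ (S' : Finset S) (ψ : S → ℕ), Set.BijOn ψ S' (range S'.card) ∧
      (∀ i ∈ S', ξ i = β (ψ i)) ∧ ∀ i ∉ S', ξ i = 0 := by
  have hlat := isSublattice_tightSets hβ hξ.1
  choose! T hT hiT using fun i => exists_mem_tightSets_of_mem_extremePoints hξ (i := i)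
  have hsupp : univ.filter (ξ · ≠ 0) ∈ tightSets β ξ := by
    have hU : (univ.filter (ξ · ≠ 0)).sup T ∈ tightSets β ξ :=
      sup_induction empty_mem_tightSets (fun _ h₁ _ h₂ => hlat.supClosed h₁ h₂)
        fun i hi => hT i (mem_filter.1 hi).2
    convert filter_ne_zero_mem_tightSets hβ₀ hξ.1 hU using 1
    ext i
    simp only [mem_filter, mem_univ, true_and, iff_and_self]
    exact fun hi => mem_sup.2 ⟨i, by simpa using hi, hiT i hi⟩
  obtain ⟨ψ, hψ, hval⟩ := exists_bijOn_range_of_mem_tightSets hlat hsupp fun i hi j hj =>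
    exists_separating_mem_tightSets_of_mem_extremePoints hξ (mem_filter.1 hi).2 (mem_filter.1 hj).2
  exact ⟨_, ψ, hψ, hval, fun i hi => by simpa using hi⟩

lemma mem_polymatroid_of_bijOn (hβ : AntitoneOn β (Set.Iio (Fintype.card S)))
    (hβ₀ : ∀ l < Fintype.card S, 0 ≤ β l) (hψ : Set.BijOn ψ S' (range S'.card))
    (hval : ∀ i ∈ S', ξ i = β (ψ i)) (hzero : ∀ i ∉ S', ξ i = 0) : ξ ∈ polymatroid β := by
  have hψn : ∀ i ∈ S', ψ i < Fintype.card S := fun i hi =>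
    (mem_range.1 (hψ.mapsTo hi)).trans_le (card_le_univ S')
  refine ⟨fun i => ?_, fun A => ?_⟩
  · by_cases hi : i ∈ S'
    · exact (hval i hi).symm ▸ hβ₀ _ (hψn i hi)
    · exact (hzero i hi).ge
  have hinj : Set.InjOn ψ (A ∩ S' : Finset S) := hψ.injOn.mono (by simp)
  calc ∑ i ∈ A, ξ i = ∑ i ∈ A ∩ S', ξ i :=
        (sum_subset inter_subset_left fun i hiA hi =>
          hzero i fun hiS => hi (mem_inter.2 ⟨hiA, hiS⟩)).symm
    _ = ∑ l ∈ (A ∩ S').image ψ, β l := by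
        rw [sum_image hinj]
        exact sum_congr rfl fun i hi => hval i (mem_inter.1 hi).2
    _ ≤ ∑ l ∈ range ((A ∩ S').image ψ).card, β l := by
        refine sum_le_sum_range_card hβ fun l hl => ?_
        obtain ⟨i, hi, rfl⟩ := mem_image.1 hl
        exact hψn i (mem_inter.1 hi).2
    _ ≤ ∑ l ∈ range A.card, β l := by
        rw [card_image_of_injOn hinj]
        exact sum_range_mono hβ₀ (card_le_card inter_subset_left) (card_le_univ A)

theorem mem_extremePoints_polymatroid_of_bijOn (hβ : AntitoneOn β (Set.Iio (Fintype.card S)))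
    (hβ₀ : ∀ l < Fintype.card S, 0 ≤ β l) (hψ : Set.BijOn ψ S' (range S'.card))
    (hval : ∀ i ∈ S', ξ i = β (ψ i)) (hzero : ∀ i ∉ S', ξ i = 0) :
    ξ ∈ Set.extremePoints ℝ (polymatroid β) := by
  refine mem_extremePoints_polymatroid_iff.2
    ⟨mem_polymatroid_of_bijOn hβ hβ₀ hψ hval hzero, fun d hd₀ hdT => funext fun i => ?_⟩
  by_cases hi : i ∈ S'
  · have hlt : ψ i < S'.card := by simpa using hψ.mapsTo hi
    have hstep : S'.filter (ψ · < ψ i + 1) = insert i (S'.filter (ψ · < ψ i)) := by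
      ext j
      simp only [mem_filter, mem_insert]
      constructor
      · rintro ⟨hj, hjlt⟩
        rcases (Nat.lt_succ_iff.1 hjlt).lt_or_eq with h | h
        exacts [Or.inr ⟨hj, h⟩, Or.inl (hψ.injOn hj hi h)]
      · rintro (rfl | ⟨hj, hjlt⟩)
        exacts [⟨hi, Nat.lt_succ_self _⟩, ⟨hj, hjlt.trans (Nat.lt_succ_self _)⟩]
    have hsucc := hdT _ (filter_lt_mem_tightSets hψ hval hlt)
    rw [hstep, sum_insert (by simp), hdT _ (filter_lt_mem_tightSets hψ hval hlt.le),
      add_zero] at hsucc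
    exact hsucc
  · exact hd₀ i (hzero i hi)

end Polymatroid

/-- the extreme points of the polymatroid
`Q = {x ≥ 0 : Σ_{i ∈ A} x_i ≤ Σ_{l < |A|} β_l for all A ⊆ S}` are exactly the
vectors obtained by injectively assigning the top `|S'|` values `β_0, …, β_{|S'|-1}`
to the coordinates of some subset `S' ⊆ S` and `0` elsewhere. -/
theorem extreme_points_of_quality_polymatroid {S : Type*} [Fintype S] [DecidableEq S]
    (n : ℕ) (hn : Fintype.card S = n)
    (β : ℕ → ℝ) (hmono : ∀ k l : ℕ, k ≤ l → l < n → β l ≤ β k)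
    (hpos : ∀ l : ℕ, l < n → 0 ≤ β l) :
    Set.extremePoints ℝ
      {x : S → ℝ | (∀ i, 0 ≤ x i) ∧
        ∀ A : Finset S, ∑ i ∈ A, x i ≤ ∑ l ∈ Finset.range A.card, β l} =
    {ξ : S → ℝ | ∃ (S' : Finset S) (ψ : S → ℕ),
      Set.BijOn ψ (↑S' : Set S) (↑(Finset.range S'.card) : Set ℕ) ∧
      (∀ i ∈ S', ξ i = β (ψ i)) ∧ ∀ i ∉ S', ξ i = 0} := by
  subst hn
  have hβ : AntitoneOn β (Set.Iio (Fintype.card S)) := fun k _ l hl hkl => hmono k l hkl hl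
  ext ξ
  constructor
  · exact exists_bijOn_of_mem_extremePoints_polymatroid hβ hpos
  · rintro ⟨S', ψ, hψ, hval, hzero⟩
    exact mem_extremePoints_polymatroid_of_bijOn hβ hpos hψ hval hzero
end
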